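/- arXiv:2410.18465 — 9 statements merged into one kernel-verified Lean document; each statement's English description precedes it below -/
import Mathlib

section
/- Let h : ℝⁿ → ℝ be continuously differentiable on a convex set C with ν-Hölder continuous gradient with constant M, ν ∈ (0,1). Then for every ε > 0 and all x, y ∈ C, h(y) ≤ h(x) + ⟨∇h(x), y − x⟩ + (L(ε)/2)‖y − x‖² + ε, where L(ε) = ((1−ν)/((1+ν)·2ε))^((1−ν)/(1+ν)) · M^(2/(1+ν)). -/
/-!
Along the segment from `x` to `y`, the Hölder bound on the gradient makes
`t ↦ h (x + t (y - x)) - t ⟪∇h x, y - x⟫ - M/(1+ν) ‖y - x‖^(1+ν) t^(1+ν)` antitone on `[0, 1]`,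
which gives `h y ≤ h x + ⟪∇h x, y - x⟫ + M/(1+ν) ‖y - x‖^(1+ν)`. Weighted AM-GM with weights
`(1 ± ν)/2` then bounds `M/(1+ν) r^(1+ν)` by `L(ε)/2 r² + ε`: `L(ε)` is precisely the constant for
which the geometric mean of `L(ε) r²/(1+ν)` and `2ε/(1-ν)` equals `M/(1+ν) r^(1+ν)`.
-/

open scoped RealInnerProductSpace
open Real Set

theorem Convex.le_add_inner_add_mul_rpow_of_holder_gradient {E : Type*}
    [NormedAddCommGroup E] [InnerProductSpace ℝ E] [CompleteSpace E]
    {C : Set E} (hC : Convex ℝ C) {h : E → ℝ} {h' : E → E}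
    (hgrad : ∀ x ∈ C, HasGradientAt h (h' x) x) {ν M : ℝ} (hν : 0 ≤ ν)
    (hHolder : ∀ x ∈ C, ∀ y ∈ C, ‖h' x - h' y‖ ≤ M * ‖x - y‖ ^ ν) {x y : E}
    (hx : x ∈ C) (hy : y ∈ C) :
    h y ≤ h x + ⟪h' x, y - x⟫ + M / (1 + ν) * ‖y - x‖ ^ (1 + ν) := by
  set d := y - x
  have hseg : ∀ t ∈ Icc (0 : ℝ) 1, x + t • d ∈ C := fun t ht => hC.add_smul_sub_mem hx hy ht
  set g : ℝ → ℝ := fun t =>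
    h (x + t • d) - t * ⟪h' x, d⟫ - M / (1 + ν) * ‖d‖ ^ (1 + ν) * t ^ (1 + ν)
  have hg : ∀ t ∈ Icc (0 : ℝ) 1,
      HasDerivAt g (⟪h' (x + t • d) - h' x, d⟫ - M * ‖d‖ ^ (1 + ν) * t ^ ν) t := by
    intro t ht
    have hline : HasDerivAt (fun t : ℝ => x + t • d) d t := by
      simpa using ((hasDerivAt_id t).smul_const d).const_add x
    have hh := (hgrad _ (hseg t ht)).hasFDerivAt.comp_hasDerivAt t hline
    have hpow := hasDerivAt_rpow_const (x := t) (p := 1 + ν) (Or.inr (by linarith))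
    refine ((hh.sub ((hasDerivAt_id t).mul_const ⟪h' x, d⟫)).sub
      (hpow.const_mul (M / (1 + ν) * ‖d‖ ^ (1 + ν)))).congr_deriv ?_
    rw [InnerProductSpace.toDual_apply_apply, inner_sub_left, add_sub_cancel_left]
    field_simp
  have hbound : ∀ t ∈ Icc (0 : ℝ) 1, ⟪h' (x + t • d) - h' x, d⟫ ≤ M * ‖d‖ ^ (1 + ν) * t ^ ν := by
    intro t ht
    calc ⟪h' (x + t • d) - h' x, d⟫ ≤ ‖h' (x + t • d) - h' x‖ * ‖d‖ := real_inner_le_norm _ _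
      _ ≤ M * ‖t • d‖ ^ ν * ‖d‖ := by
          gcongr
          simpa using hHolder _ (hseg t ht) x hx
      _ = M * ‖d‖ ^ (1 + ν) * t ^ ν := by
          rw [norm_smul, norm_of_nonneg ht.1, mul_rpow ht.1 (norm_nonneg d),
            rpow_add' (norm_nonneg d) (by linarith), rpow_one]
          ring
  have hanti : AntitoneOn g (Icc 0 1) :=
    antitoneOn_of_deriv_nonpos (convex_Icc 0 1)
      (fun t ht => (hg t ht).continuousAt.continuousWithinAt)
      (fun t ht => (hg t (interior_subset ht)).differentiableAt.differentiableWithinAt)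
      (fun t ht => by
        rw [(hg t (interior_subset ht)).deriv]
        linarith [hbound t (interior_subset ht)])
  have hends := hanti (left_mem_Icc.2 zero_le_one) (right_mem_Icc.2 zero_le_one) zero_le_one
  simp only [g, zero_smul, add_zero, one_smul, zero_mul, sub_zero, one_rpow, mul_one,
    zero_rpow (by linarith : 1 + ν ≠ 0), mul_zero] at hends
  rw [add_sub_cancel] at hends
  linarith

noncomputable def holderToLipschitzConst (ν M ε : ℝ) : ℝ :=
  ((1 - ν) / (1 + ν) * (1 / (2 * ε))) ^ ((1 - ν) / (1 + ν)) * M ^ (2 / (1 + ν))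

theorem holderToLipschitzConst_nonneg {ν M ε : ℝ} (hν₀ : 0 ≤ ν) (hν₁ : ν < 1) (hM : 0 ≤ M)
    (hε : 0 < ε) :
    0 ≤ holderToLipschitzConst ν M ε := by
  have : 0 < 1 - ν := by linarith
  unfold holderToLipschitzConst
  positivity

theorem holderToLipschitzConst_rpow {ν M ε : ℝ} (hν₀ : 0 ≤ ν) (hν₁ : ν < 1) (hM : 0 ≤ M)
    (hε : 0 < ε) :
    holderToLipschitzConst ν M ε ^ ((1 + ν) / 2) =
      ((1 - ν) / (1 + ν) * (1 / (2 * ε))) ^ ((1 - ν) / 2) * M := by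
  have hK : 0 ≤ (1 - ν) / (1 + ν) * (1 / (2 * ε)) := by
    have : 0 ≤ 1 - ν := by linarith
    positivity
  rw [holderToLipschitzConst, mul_rpow (rpow_nonneg hK _) (rpow_nonneg hM _), ← rpow_mul hK,
    ← rpow_mul hM]
  have h1ν : 1 + ν ≠ 0 := by linarith
  congr 2
  · field_simp
  · rw [div_mul_div_cancel₀ h1ν, div_self two_ne_zero, rpow_one]

theorem holderToLipschitzConst_div_rpow_mul_rpow {ν M ε : ℝ} (hν₀ : 0 ≤ ν) (hν₁ : ν < 1)
    (hM : 0 ≤ M) (hε : 0 < ε) :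
    (holderToLipschitzConst ν M ε / (1 + ν)) ^ ((1 + ν) / 2) * (2 * ε / (1 - ν)) ^ ((1 - ν) / 2) =
      M / (1 + ν) := by
  have h1ν : 0 < 1 + ν := by linarith
  have h1ν' : 0 < 1 - ν := by linarith
  have hL := holderToLipschitzConst_nonneg hν₀ hν₁ hM hε
  have hK : (1 - ν) / (1 + ν) * (1 / (2 * ε)) * (2 * ε / (1 - ν)) = (1 + ν)⁻¹ := by field_simp
  calc _ = holderToLipschitzConst ν M ε ^ ((1 + ν) / 2) * (2 * ε / (1 - ν)) ^ ((1 - ν) / 2)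
        / (1 + ν) ^ ((1 + ν) / 2) := by
          rw [div_rpow hL h1ν.le]
          ring
    _ = M * (((1 - ν) / (1 + ν) * (1 / (2 * ε))) ^ ((1 - ν) / 2) *
          (2 * ε / (1 - ν)) ^ ((1 - ν) / 2)) / (1 + ν) ^ ((1 + ν) / 2) := by
          rw [holderToLipschitzConst_rpow hν₀ hν₁ hM hε]
          ring
    _ = M / (1 + ν) ^ ((1 - ν) / 2 + (1 + ν) / 2) := by
          rw [← mul_rpow (by positivity) (by positivity), hK, inv_rpow h1ν.le, rpow_add h1ν]
          field_simp
    _ = M / (1 + ν) := by rw [show (1 - ν) / 2 + (1 + ν) / 2 = 1 by ring, rpow_one]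

theorem mul_rpow_le_holderToLipschitzConst_mul_sq_add {ν M ε r : ℝ} (hν₀ : 0 ≤ ν) (hν₁ : ν < 1)
    (hM : 0 ≤ M) (hε : 0 < ε) (hr : 0 ≤ r) :
    M / (1 + ν) * r ^ (1 + ν) ≤ holderToLipschitzConst ν M ε / 2 * r ^ 2 + ε := by
  set L := holderToLipschitzConst ν M ε
  have h1ν' : 0 < 1 - ν := by linarith
  have hL : 0 ≤ L := holderToLipschitzConst_nonneg hν₀ hν₁ hM hε
  have hamgm := geom_mean_le_arith_mean2_weighted (w₁ := (1 + ν) / 2) (w₂ := (1 - ν) / 2)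
    (p₁ := L / (1 + ν) * r ^ 2) (p₂ := 2 * ε / (1 - ν)) (by positivity) (by positivity)
    (by positivity) (by positivity) (by ring)
  have hgeom : (L / (1 + ν) * r ^ 2) ^ ((1 + ν) / 2) * (2 * ε / (1 - ν)) ^ ((1 - ν) / 2) =
      M / (1 + ν) * r ^ (1 + ν) := by
    rw [mul_rpow (by positivity) (by positivity), ← rpow_natCast, ← rpow_mul hr,
      ← holderToLipschitzConst_div_rpow_mul_rpow hν₀ hν₁ hM hε,
      Nat.cast_ofNat, show (2 : ℝ) * ((1 + ν) / 2) = 1 + ν by ring]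
    ring
  calc M / (1 + ν) * r ^ (1 + ν)
      ≤ (1 + ν) / 2 * (L / (1 + ν) * r ^ 2) + (1 - ν) / 2 * (2 * ε / (1 - ν)) := hgeom ▸ hamgm
    _ = L / 2 * r ^ 2 + ε := by field_simp

theorem stmt1_general {n : ℕ} (C : Set (EuclideanSpace ℝ (Fin n))) (hC : Convex ℝ C)
    (h : EuclideanSpace ℝ (Fin n) → ℝ)
    (h' : EuclideanSpace ℝ (Fin n) → EuclideanSpace ℝ (Fin n))
    (hgrad : ∀ x, HasGradientAt h (h' x) x)
    (ν M : ℝ) (hν₀ : 0 < ν) (hν₁ : ν < 1) (hM : 0 < M)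
    (hHolder : ∀ x ∈ C, ∀ y ∈ C, ‖h' x - h' y‖ ≤ M * ‖x - y‖ ^ ν) :
    ∀ ε : ℝ, 0 < ε → ∀ x ∈ C, ∀ y ∈ C,
      h y ≤ h x + ⟪h' x, y - x⟫
        + (((1 - ν) / (1 + ν) * (1 / (2 * ε))) ^ ((1 - ν) / (1 + ν)) * M ^ (2 / (1 + ν)) / 2)
            * ‖y - x‖ ^ 2 + ε := by
  intro ε hε x hx y hy
  have hdescent := hC.le_add_inner_add_mul_rpow_of_holder_gradient (fun z _ => hgrad z) hν₀.le
    hHolder hx hy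
  have hyoung := mul_rpow_le_holderToLipschitzConst_mul_sq_add hν₀.le hν₁ hM.le hε
    (norm_nonneg (y - x))
  rw [holderToLipschitzConst] at hyoung
  linarith

theorem stmt1 {n : ℕ} (C : Set (EuclideanSpace ℝ (Fin n))) (hC : Convex ℝ C)
    (h : EuclideanSpace ℝ (Fin n) → ℝ)
    (h' : EuclideanSpace ℝ (Fin n) → EuclideanSpace ℝ (Fin n))
    (hsmooth : ContDiff ℝ 1 h)
    (hgrad : ∀ x, HasGradientAt h (h' x) x)
    (ν M : ℝ) (hν₀ : 0 < ν) (hν₁ : ν < 1) (hM : 0 < M)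
    (hHolder : ∀ x ∈ C, ∀ y ∈ C, ‖h' x - h' y‖ ≤ M * ‖x - y‖ ^ ν) :
    ∀ ε : ℝ, 0 < ε → ∀ x ∈ C, ∀ y ∈ C,
      h y ≤ h x + ⟪h' x, y - x⟫
        + (((1 - ν) / (1 + ν) * (1 / (2 * ε))) ^ ((1 - ν) / (1 + ν)) * M ^ (2 / (1 + ν)) / 2)
            * ‖y - x‖ ^ 2 + ε :=
  stmt1_general C hC h h' hgrad ν M hν₀ hν₁ hM hHolder
end

section
/- Let ν ∈ (0,1], M > 0, θ < 0 and r > 0, and set t* = min{1, (|θ|/(M r^(1+ν)))^(1/ν)}. Then t*·θ + (M/(1+ν))·(t*)^(1+ν)·r^(1+ν) ≤ −(ν/(1+ν))·|θ|·min{1, (|θ|/(M r^(1+ν)))^(1/ν)}. -/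
/-! Since `t* ≤ (|θ| / (M r^(1+ν)))^(1/ν)`, we have `M (t*)^ν r^(1+ν) ≤ |θ|`. Splitting
`(t*)^(1+ν) = t* (t*)^ν`, the second term is therefore at most `t* |θ| / (1+ν)`, and adding
`t* θ = -t* |θ|` leaves `-(ν/(1+ν)) |θ| t*`. -/

open Real

lemma min_one_rpow_inv_rpow_le {A ν : ℝ} (hA : 0 ≤ A) (hν : 0 < ν) :
    min 1 (A ^ (1 / ν)) ^ ν ≤ A :=
  calc min 1 (A ^ (1 / ν)) ^ ν ≤ (A ^ (1 / ν)) ^ ν := by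
        gcongr
        exact min_le_right _ _
    _ = A := by rw [← rpow_mul hA, one_div_mul_cancel hν.ne', rpow_one]

lemma mul_add_div_mul_rpow_le {ν M R θ t : ℝ} (hν : 0 < ν) (hθ : θ ≤ 0) (ht : 0 ≤ t)
    (h : M * t ^ ν * R ≤ |θ|) :
    t * θ + M / (1 + ν) * t ^ (1 + ν) * R ≤ -(ν / (1 + ν)) * |θ| * t := by
  rw [abs_of_nonpos hθ] at h ⊢
  have h1ν : 0 < 1 + ν := by linarith
  have hsplit : M / (1 + ν) * t ^ (1 + ν) * R = t * (M * t ^ ν * R) / (1 + ν) := by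
    rw [rpow_add' ht h1ν.ne', rpow_one]
    ring
  calc t * θ + M / (1 + ν) * t ^ (1 + ν) * R
      = t * θ + t * (M * t ^ ν * R) / (1 + ν) := by rw [hsplit]
    _ ≤ t * θ + t * -θ / (1 + ν) := by gcongr
    _ = -(ν / (1 + ν)) * -θ * t := by field_simp; ring

theorem stmt3_general (ν M θ r : ℝ) (hν₀ : 0 < ν) (hM : 0 < M)
    (hθ : θ < 0) (hr : 0 < r) :
    (min 1 ((|θ| / (M * r ^ (1 + ν))) ^ (1 / ν))) * θ
        + (M / (1 + ν)) * (min 1 ((|θ| / (M * r ^ (1 + ν))) ^ (1 / ν))) ^ (1 + ν) * r ^ (1 + ν)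
      ≤ -(ν / (1 + ν)) * |θ| * min 1 ((|θ| / (M * r ^ (1 + ν))) ^ (1 / ν)) := by
  have hMr : 0 < M * r ^ (1 + ν) := mul_pos hM (rpow_pos_of_pos hr _)
  set t := min 1 ((|θ| / (M * r ^ (1 + ν))) ^ (1 / ν))
  have ht : 0 ≤ t := le_min zero_le_one (rpow_nonneg (by positivity) _)
  have hbound : M * t ^ ν * r ^ (1 + ν) ≤ |θ| := by
    have := (le_div_iff₀ hMr).mp
      (min_one_rpow_inv_rpow_le (A := |θ| / (M * r ^ (1 + ν))) (by positivity) hν₀)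
    linarith
  exact mul_add_div_mul_rpow_le hν₀ hθ.le ht hbound

theorem stmt3 (ν M θ r : ℝ) (hν₀ : 0 < ν) (hν₁ : ν ≤ 1) (hM : 0 < M)
    (hθ : θ < 0) (hr : 0 < r) :
    (min 1 ((|θ| / (M * r ^ (1 + ν))) ^ (1 / ν))) * θ
        + (M / (1 + ν)) * (min 1 ((|θ| / (M * r ^ (1 + ν))) ^ (1 / ν))) ^ (1 + ν) * r ^ (1 + ν)
      ≤ -(ν / (1 + ν)) * |θ| * min 1 ((|θ| / (M * r ^ (1 + ν))) ^ (1 / ν)) :=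
  stmt3_general ν M θ r hν₀ hM hθ hr
end

section
/- Let (γ_k) and (β_k) be sequences of non-negative reals with γ_{k+1} ≤ γ_k − c β_k min{1, β_k^α / A} for all k ≥ 0, where c ∈ (0,1), α > 0, A > 0, and β_k ≥ γ_k for all k. Set k₀ = ⌈(1/c)(log(γ₀/(c A^{1/α})))₊⌉. Then for all k ≥ k₀, γ_k ≤ (γ_{k₀}^{−α} + A^{−1} c α (k − k₀))^{−1/α}. -/
/-!
Below the threshold `A ^ (1 / α)` the bound `γ k ≤ β k` and the monotonicity of
`x ↦ x * min 1 (x ^ α / A)` give `γ (k + 1) ≤ γ k * (1 - A⁻¹ * c * γ k ^ α)`, and Bernoulli's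
inequality `(1 - t) ^ (-α) ≥ 1 + α t` turns this into `γ (k + 1) ^ (-α) ≥ γ k ^ (-α) + A⁻¹ c α`;
summing these increments gives the bound. The threshold is reached by step `k₀`: either some
`β j` with `j < k₀` is already below it, or every step before `k₀` contracts `γ` by the factor
`1 - c ≤ exp (-c)`, and `k₀` is chosen so that `exp (-c k₀) * γ 0 ≤ c * A ^ (1 / α)`.
-/

open Real

lemma one_add_mul_le_one_sub_rpow_neg {α t : ℝ} (hα : 0 ≤ α) (ht : t < 1) :
    1 + α * t ≤ (1 - t) ^ (-α) := by
  have h1t : 0 < 1 - t := by linarith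
  calc 1 + α * t ≤ exp (α * t) := by linarith [add_one_le_exp (α * t)]
    _ ≤ exp (log (1 - t) * -α) :=
        exp_le_exp.mpr (by nlinarith [mul_le_mul_of_nonneg_left (log_le_sub_one_of_pos h1t) hα])
    _ = (1 - t) ^ (-α) := (rpow_def_of_pos h1t _).symm

lemma rpow_neg_add_le_of_le_mul_one_sub {α s g g' : ℝ} (hα : 0 ≤ α) (hg : 0 < g) (hg' : 0 < g')
    (h : g' ≤ g * (1 - s * g ^ α)) : g ^ (-α) + s * α ≤ g' ^ (-α) := by
  have h1t : 0 < 1 - s * g ^ α := pos_of_mul_pos_right (hg'.trans_le h) hg.le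
  have hgα : g ^ α ≠ 0 := (rpow_pos_of_pos hg α).ne'
  calc g ^ (-α) + s * α = g ^ (-α) * (1 + α * (s * g ^ α)) := by
        rw [rpow_neg hg.le]; field_simp
    _ ≤ g ^ (-α) * (1 - s * g ^ α) ^ (-α) := by
        gcongr
        exact one_add_mul_le_one_sub_rpow_neg hα (by linarith)
    _ = (g * (1 - s * g ^ α)) ^ (-α) := (mul_rpow hg.le h1t.le).symm
    _ ≤ g' ^ (-α) := rpow_le_rpow_of_nonpos hg' h (neg_nonpos.mpr hα)

lemma le_one_div_rpow_of_le_rpow_neg {α x D : ℝ} (hα : 0 < α) (hx : 0 < x) (hD : 0 < D)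
    (h : D ≤ x ^ (-α)) : x ≤ (1 / D) ^ (1 / α) := by
  calc x = (1 / x ^ (-α)) ^ (1 / α) := by
        rw [rpow_neg hx.le, one_div, inv_inv, one_div, rpow_rpow_inv hx.le hα.ne']
    _ ≤ (1 / D) ^ (1 / α) := by gcongr

lemma mul_le_mul_min_one_rpow_div {α A x y : ℝ} (hα : 0 ≤ α) (hA : 0 ≤ A) (hx : 0 ≤ x)
    (hxy : x ≤ y) : x * min 1 (x ^ α / A) ≤ y * min 1 (y ^ α / A) := by
  have hy := hx.trans hxy
  gcongr

lemma exp_neg_mul_le_of_log_div_le {x b y : ℝ} (hx : 0 ≤ x) (hb : 0 < b)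
    (h : log (x / b) ≤ y) : exp (-y) * x ≤ b := by
  rcases hx.eq_or_lt with rfl | hx
  · rw [mul_zero]; exact hb.le
  rw [log_le_iff_le_exp (div_pos hx hb), div_le_iff₀ hb] at h
  rw [exp_neg, inv_mul_le_iff₀ (exp_pos y)]
  linarith

section Recursion

variable {γ β : ℕ → ℝ} {c α A : ℝ}

lemma antitone_of_le_sub_mul_min (hγ : ∀ k, 0 ≤ γ k) (hc : 0 ≤ c) (hA : 0 ≤ A)
    (hrec : ∀ k, γ (k + 1) ≤ γ k - c * β k * min 1 (β k ^ α / A))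
    (hβγ : ∀ k, γ k ≤ β k) : Antitone γ := by
  refine antitone_nat_of_succ_le fun k => (hrec k).trans (sub_le_self _ ?_)
  have hβ : 0 ≤ β k := (hγ k).trans (hβγ k)
  positivity

lemma le_exp_neg_mul_of_forall_lt_rpow (hγ : ∀ k, 0 ≤ γ k) (hc : 0 ≤ c) (hA : 0 < A)
    (hrec : ∀ k, γ (k + 1) ≤ γ k - c * β k * min 1 (β k ^ α / A))
    (hβγ : ∀ k, γ k ≤ β k) {n : ℕ} (hlarge : ∀ j < n, A < β j ^ α) :
    γ n ≤ exp (-(c * n)) * γ 0 := by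
  induction n with
  | zero => simp
  | succ n ih =>
    have hmin : min 1 (β n ^ α / A) = 1 :=
      min_eq_left ((one_le_div hA).mpr (hlarge n n.lt_succ_self).le)
    have hcontract : γ (n + 1) ≤ exp (-c) * γ n := by
      have := hrec n
      rw [hmin, mul_one] at this
      nlinarith [hβγ n, hγ n, add_one_le_exp (-c)]
    calc γ (n + 1) ≤ exp (-c) * (exp (-(c * n)) * γ 0) :=
          hcontract.trans (by gcongr; exact ih fun j hj => hlarge j (hj.trans n.lt_succ_self))
      _ = exp (-(c * (n + 1 : ℕ))) * γ 0 := by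
          rw [← mul_assoc, ← exp_add]; push_cast; ring_nf

lemma le_rpow_one_div_of_log_bound_le (hγ : ∀ k, 0 ≤ γ k) (hc₀ : 0 < c) (hc₁ : c ≤ 1) (hα : 0 < α)
    (hA : 0 < A) (hrec : ∀ k, γ (k + 1) ≤ γ k - c * β k * min 1 (β k ^ α / A))
    (hβγ : ∀ k, γ k ≤ β k) {k₀ : ℕ}
    (hk₀ : 1 / c * max (log (γ 0 / (c * A ^ (1 / α)))) 0 ≤ k₀) :
    γ k₀ ≤ A ^ (1 / α) := by
  have hB : 0 < A ^ (1 / α) := rpow_pos_of_pos hA _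
  by_cases hlarge : ∀ j < k₀, A < β j ^ α
  · have hlog : log (γ 0 / (c * A ^ (1 / α))) ≤ c * k₀ := by
      rw [one_div, inv_mul_le_iff₀ hc₀] at hk₀
      exact (le_max_left _ _).trans hk₀
    calc γ k₀ ≤ exp (-(c * k₀)) * γ 0 :=
          le_exp_neg_mul_of_forall_lt_rpow hγ hc₀.le hA hrec hβγ hlarge
      _ ≤ c * A ^ (1 / α) := exp_neg_mul_le_of_log_div_le (hγ 0) (by positivity) hlog
      _ ≤ A ^ (1 / α) := mul_le_of_le_one_left hB.le hc₁
  · push Not at hlarge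
    obtain ⟨j, hj, hβj⟩ := hlarge
    have hβ : 0 ≤ β j := (hγ j).trans (hβγ j)
    have hβB : β j ≤ A ^ (1 / α) := by
      rwa [one_div, le_rpow_inv_iff_of_pos hβ hA.le hα]
    exact (antitone_of_le_sub_mul_min hγ hc₀.le hA.le hrec hβγ hj.le).trans
      ((hβγ j).trans hβB)

lemma succ_le_mul_one_sub_of_le_rpow_one_div (hγ : ∀ k, 0 ≤ γ k) (hc : 0 ≤ c) (hα : 0 < α)
    (hA : 0 < A) (hrec : ∀ k, γ (k + 1) ≤ γ k - c * β k * min 1 (β k ^ α / A))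
    (hβγ : ∀ k, γ k ≤ β k) {j : ℕ} (hj : γ j ≤ A ^ (1 / α)) :
    γ (j + 1) ≤ γ j * (1 - A⁻¹ * c * γ j ^ α) := by
  have hγα : γ j ^ α ≤ A := by
    rwa [one_div, le_rpow_inv_iff_of_pos (hγ j) hA.le hα] at hj
  have hmin : min 1 (γ j ^ α / A) = γ j ^ α / A := min_eq_right ((div_le_one hA).mpr hγα)
  have hmono := mul_le_mul_min_one_rpow_div hα.le hA.le (hγ j) (hβγ j)
  rw [hmin] at hmono
  calc γ (j + 1) ≤ γ j - c * (γ j * (γ j ^ α / A)) := by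
        linarith [hrec j, mul_le_mul_of_nonneg_left hmono hc]
    _ = γ j * (1 - A⁻¹ * c * γ j ^ α) := by ring

end Recursion

lemma rpow_neg_add_mul_le_of_succ_le_mul_one_sub {γ : ℕ → ℝ} {α s : ℝ} {m : ℕ} (hα : 0 ≤ α)
    (hanti : Antitone γ) (hstep : ∀ j, m ≤ j → γ (j + 1) ≤ γ j * (1 - s * γ j ^ α))
    {k : ℕ} (hk : m ≤ k) (hpos : 0 < γ k) :
    γ m ^ (-α) + s * α * ((k : ℝ) - m) ≤ γ k ^ (-α) := by
  induction k, hk using Nat.le_induction with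
  | base => simp
  | succ k hmk ih =>
    have hγk : 0 < γ k := hpos.trans_le (hanti k.le_succ)
    have hinc := rpow_neg_add_le_of_le_mul_one_sub hα hγk hpos (hstep k hmk)
    push_cast
    linarith [ih hγk]

theorem stmt4_general (γ β : ℕ → ℝ) (hγ : ∀ k, 0 ≤ γ k)
    (c α A : ℝ) (hc₀ : 0 < c) (hc₁ : c < 1) (hα : 0 < α) (hA : 0 < A)
    (hrec : ∀ k, γ (k + 1) ≤ γ k - c * β k * min 1 (β k ^ α / A))
    (hβγ : ∀ k, γ k ≤ β k)
    (k₀ : ℕ) (hk₀ : k₀ = ⌈(1 / c) * max (Real.log (γ 0 / (c * A ^ (1 / α)))) 0⌉₊) :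
    ∀ k, k₀ ≤ k →
      γ k ≤ (1 / (γ k₀ ^ (-α) + A⁻¹ * c * α * ((k : ℝ) - (k₀ : ℝ)))) ^ (1 / α) := by
  intro k hk
  have hanti := antitone_of_le_sub_mul_min hγ hc₀.le hA.le hrec hβγ
  have hthreshold : γ k₀ ≤ A ^ (1 / α) :=
    le_rpow_one_div_of_log_bound_le hγ hc₀ hc₁.le hα hA hrec hβγ (hk₀ ▸ Nat.le_ceil _)
  have hstep : ∀ j, k₀ ≤ j → γ (j + 1) ≤ γ j * (1 - A⁻¹ * c * γ j ^ α) := fun j hj =>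
    succ_le_mul_one_sub_of_le_rpow_one_div hγ hc₀.le hα hA hrec hβγ
      ((hanti hj).trans hthreshold)
  have hkk₀ : (0 : ℝ) ≤ k - k₀ := sub_nonneg.mpr (by exact_mod_cast hk)
  rcases (hγ k).eq_or_lt with hzero | hpos
  · rw [← hzero]
    have := rpow_nonneg (hγ k₀) (-α)
    positivity
  · have hγk₀ : 0 < γ k₀ := hpos.trans_le (hanti hk)
    have := rpow_pos_of_pos hγk₀ (-α)
    exact le_one_div_rpow_of_le_rpow_neg hα hpos (by positivity)
      (rpow_neg_add_mul_le_of_succ_le_mul_one_sub hα.le hanti hstep hk hpos)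

theorem stmt4 (γ β : ℕ → ℝ) (hγ : ∀ k, 0 ≤ γ k) (hβ : ∀ k, 0 ≤ β k)
    (c α A : ℝ) (hc₀ : 0 < c) (hc₁ : c < 1) (hα : 0 < α) (hA : 0 < A)
    (hrec : ∀ k, γ (k + 1) ≤ γ k - c * β k * min 1 (β k ^ α / A))
    (hβγ : ∀ k, γ k ≤ β k)
    (k₀ : ℕ) (hk₀ : k₀ = ⌈(1 / c) * max (Real.log (γ 0 / (c * A ^ (1 / α)))) 0⌉₊) :
    ∀ k, k₀ ≤ k →
      γ k ≤ (1 / (γ k₀ ^ (-α) + A⁻¹ * c * α * ((k : ℝ) - (k₀ : ℝ)))) ^ (1 / α) :=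
  stmt4_general γ β hγ c α A hc₀ hc₁ hα hA hrec hβγ k₀ hk₀
end

section
/- Let (γ_k), (β_k) be non-negative sequences with γ_{k+1} ≤ γ_k − c β_k min{1, β_k^α/A} and β_k ≥ γ_k for all k, where c ∈ (0,1), α, A > 0. Let β_k* = min_{0≤ℓ≤k} β_ℓ and Γ_k = (γ_{k₀}^{−α} + A^{−1} c α (k − k₀))^{−1/α} with k₀ = ⌈(1/c)(log(γ₀/(c A^{1/α})))₊⌉. Then β_k* ≤ e^{1/e} · Γ_{⌊(k+k₀+1)/2⌋} for all k ≥ k₀ + 2A/(c γ_{k₀}^α). -/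
/-!
Write `φ(x) = x min{1, x^α / A}`. Since `φ` is monotone and `β ≥ γ`, also
`γ (k+1) ≤ γ k - c φ(γ k)`. While `γ k > A^{1/α}` this contracts `γ` by `1 - c ≤ e^{-c}`,
so after `k₀` steps `γ k₀ ≤ A^{1/α}`. From then on `φ(γ k) = γ k ^ (1+α) / A`, and
`(1 - t)^α ≤ (1 + α t)⁻¹` turns the recursion into `γ (k+1) ^ (-α) ≥ γ k ^ (-α) + c α / A`,
i.e. `γ k ≤ Γ k`. Finally, let `m = ⌊(k + k₀ + 1)/2⌋`. If all `β ℓ` with `m ≤ ℓ ≤ k` exceeded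
`e^{1/e} Γ m`, summing the recursion over this window would push `γ` below zero; the constant
`e^{1/e}` is what makes `1 + α ≤ (e^{1/e})^{1+α}`.
-/

open Real Finset

noncomputable def sufficientDecrease (α A x : ℝ) : ℝ := x * min 1 (x ^ α / A)

section SufficientDecrease

variable {α A x y : ℝ}

lemma sufficientDecrease_nonneg (hA : 0 ≤ A) (hx : 0 ≤ x) : 0 ≤ sufficientDecrease α A x :=
  mul_nonneg hx (le_min zero_le_one (div_nonneg (rpow_nonneg hx α) hA))

lemma sufficientDecrease_pos (hA : 0 < A) (hx : 0 < x) : 0 < sufficientDecrease α A x :=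
  mul_pos hx (lt_min one_pos (div_pos (rpow_pos_of_pos hx α) hA))

lemma sufficientDecrease_le_sufficientDecrease (hα : 0 ≤ α) (hA : 0 ≤ A) (hx : 0 ≤ x)
    (hxy : x ≤ y) : sufficientDecrease α A x ≤ sufficientDecrease α A y :=
  mul_le_mul hxy (min_le_min_left 1 (div_le_div_of_nonneg_right (rpow_le_rpow hx hxy hα) hA))
    (le_min zero_le_one (div_nonneg (rpow_nonneg hx α) hA)) (hx.trans hxy)

lemma sufficientDecrease_of_le_rpow (hA : 0 < A) (h : A ≤ x ^ α) :
    sufficientDecrease α A x = x := by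
  rw [sufficientDecrease, min_eq_left ((one_le_div hA).2 h), mul_one]

lemma sufficientDecrease_of_rpow_le (hA : 0 < A) (h : x ^ α ≤ A) :
    sufficientDecrease α A x = x * (x ^ α / A) := by
  rw [sufficientDecrease, min_eq_right ((div_le_one hA).2 h)]

end SufficientDecrease

lemma one_sub_rpow_le_inv_one_add_mul {α t : ℝ} (hα : 0 ≤ α) (ht₀ : 0 ≤ t) (ht₁ : t ≤ 1) :
    (1 - t) ^ α ≤ (1 + α * t)⁻¹ :=
  calc (1 - t) ^ α ≤ exp (-t) ^ α := rpow_le_rpow (by linarith) (one_sub_le_exp_neg t) hα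
    _ = (exp (α * t))⁻¹ := by rw [← exp_mul, ← exp_neg]; ring_nf
    _ ≤ (1 + α * t)⁻¹ := inv_anti₀ (by positivity) (by linarith [add_one_le_exp (α * t)])

lemma le_exp_div_exp_one (x : ℝ) : x ≤ exp (x / exp 1) := by
  have h := add_one_le_exp (x / exp 1 - 1)
  rwa [sub_add_cancel, exp_sub, div_le_div_iff_of_pos_right (exp_pos 1)] at h

lemma one_sub_pow_mul_le {c g M : ℝ} (hc : c ≤ 1) (hg : 0 ≤ g) (hM : 0 < M)
    {n : ℕ} (hn : log (g / M) ≤ c * n) : (1 - c) ^ n * g ≤ M := by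
  rcases hg.eq_or_lt with rfl | hg
  · simpa using hM.le
  have hpow : (1 - c) ^ n ≤ M / g :=
    calc (1 - c) ^ n ≤ exp (-c) ^ n := pow_le_pow_left₀ (by linarith) (one_sub_le_exp_neg c) n
      _ = exp (-(c * n)) := by rw [← exp_nat_mul]; ring_nf
      _ ≤ exp (-log (g / M)) := exp_le_exp.2 (by linarith)
      _ = M / g := by rw [exp_neg, exp_log (by positivity), inv_div]
  calc (1 - c) ^ n * g ≤ M / g * g := by gcongr
    _ = M := div_mul_cancel₀ M hg.ne'

lemma rpow_le_inv_add_of_le_mul_one_sub {α a x y D : ℝ} (hα : 0 < α) (ha : 0 ≤ a) (hx : 0 ≤ x)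
    (hy : 0 ≤ y) (hD : 0 < D) (hxD : x ^ α ≤ D⁻¹) (hxy : y ≤ x * (1 - a * x ^ α)) :
    y ^ α ≤ (D + α * a)⁻¹ := by
  rcases hx.eq_or_lt with rfl | hx
  · rw [zero_mul] at hxy
    rw [le_antisymm hxy hy, zero_rpow hα.ne']
    positivity
  set u := x ^ α
  have hu : 0 < u := rpow_pos_of_pos hx α
  have ht : 0 ≤ 1 - a * u := nonneg_of_mul_nonneg_right (hy.trans hxy) hx
  have huD : u * D ≤ 1 := by simpa [hD.ne'] using mul_le_mul_of_nonneg_right hxD hD.le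
  calc y ^ α ≤ (x * (1 - a * u)) ^ α := rpow_le_rpow hy hxy hα.le
    _ = u * (1 - a * u) ^ α := mul_rpow hx.le ht
    _ ≤ u * (1 + α * (a * u))⁻¹ := by
      gcongr
      exact one_sub_rpow_le_inv_one_add_mul hα.le (by positivity) (by linarith)
    _ ≤ (D + α * a)⁻¹ := by
      rw [← div_eq_mul_inv, div_le_iff₀ (by positivity), inv_mul_eq_div,
        le_div_iff₀ (by positivity)]
      nlinarith

section Sequences

variable {γ β : ℕ → ℝ} {α A c : ℝ}

lemma antitone_of_le_sub_sufficientDecrease (hA : 0 ≤ A) (hc : 0 ≤ c) (hγ : ∀ n, 0 ≤ γ n)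
    (hrec : ∀ n, γ (n + 1) ≤ γ n - c * sufficientDecrease α A (γ n)) : Antitone γ :=
  antitone_nat_of_succ_le fun n =>
    (hrec n).trans (sub_le_self _ (mul_nonneg hc (sufficientDecrease_nonneg hA (hγ n))))

lemma le_max_one_sub_pow_mul (hα : 0 < α) (hA : 0 < A) (hc₀ : 0 ≤ c) (hc₁ : c ≤ 1)
    (hγ : ∀ n, 0 ≤ γ n) (hrec : ∀ n, γ (n + 1) ≤ γ n - c * sufficientDecrease α A (γ n))
    (n : ℕ) : γ n ≤ max ((1 - c) ^ n * γ 0) (A ^ α⁻¹) := by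
  induction n with
  | zero => simp
  | succ n ih =>
    rcases le_or_gt (γ n) (A ^ α⁻¹) with hle | hlt
    · exact le_max_of_le_right
        ((antitone_of_le_sub_sufficientDecrease hA.le hc₀ hγ hrec n.le_succ).trans hle)
    · have hAγ : A ≤ γ n ^ α := (rpow_inv_le_iff_of_pos hA.le (hγ n) hα).1 hlt.le
      have hgeom : γ n ≤ (1 - c) ^ n * γ 0 := (le_max_iff.1 ih).resolve_right hlt.not_ge
      refine le_max_of_le_left ?_
      calc γ (n + 1) ≤ (1 - c) * γ n := by
            linarith [sufficientDecrease_of_le_rpow hA hAγ ▸ hrec n]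
        _ ≤ (1 - c) * ((1 - c) ^ n * γ 0) := by gcongr
        _ = (1 - c) ^ (n + 1) * γ 0 := by ring

lemma rpow_le_of_one_div_mul_max_log_le (hα : 0 < α) (hA : 0 < A) (hc₀ : 0 < c) (hc₁ : c ≤ 1)
    (hγ : ∀ n, 0 ≤ γ n) (hrec : ∀ n, γ (n + 1) ≤ γ n - c * sufficientDecrease α A (γ n))
    {n : ℕ} (hn : 1 / c * max (log (γ 0 / (c * A ^ (1 / α)))) 0 ≤ n) : γ n ^ α ≤ A := by
  have hlog : log (γ 0 / (c * A ^ (1 / α))) ≤ c * n := by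
    have := mul_le_mul_of_nonneg_left hn hc₀.le
    rw [← mul_assoc, mul_one_div_cancel hc₀.ne', one_mul] at this
    exact (le_max_left _ _).trans this
  have hgeom := one_sub_pow_mul_le hc₁ (hγ 0) (by positivity) hlog
  rw [one_div] at hgeom
  refine (le_rpow_inv_iff_of_pos (hγ n) hA.le hα).1 <|
    (le_max_one_sub_pow_mul hα hA hc₀.le hc₁ hγ hrec n).trans (max_le ?_ le_rfl)
  exact hgeom.trans (mul_le_of_le_one_left (by positivity) hc₁)

lemma rpow_le_inv_of_le_sub_sufficientDecrease {D : ℝ} (hα : 0 < α) (hA : 0 < A) (hc : 0 ≤ c)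
    (hγ : ∀ n, 0 ≤ γ n) (hrec : ∀ n, γ (n + 1) ≤ γ n - c * sufficientDecrease α A (γ n))
    (hγA : γ 0 ^ α ≤ A) (hD : 0 < D) (hγD : γ 0 ^ α ≤ D⁻¹) (n : ℕ) :
    γ n ^ α ≤ (D + A⁻¹ * c * α * n)⁻¹ := by
  induction n with
  | zero => simpa using hγD
  | succ n ih =>
    have hnA : γ n ^ α ≤ A := (rpow_le_rpow (hγ n)
      (antitone_of_le_sub_sufficientDecrease hA.le hc hγ hrec n.zero_le) hα.le).trans hγA
    have hstep : γ (n + 1) ≤ γ n * (1 - A⁻¹ * c * γ n ^ α) := by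
      refine (hrec n).trans_eq ?_
      rw [sufficientDecrease_of_rpow_le hA hnA]
      ring
    convert rpow_le_inv_add_of_le_mul_one_sub hα (by positivity) (hγ n) (hγ (n + 1))
      (by positivity) ih hstep using 2
    push_cast
    ring

end Sequences

lemma lt_mul_sufficientDecrease_exp_inv_exp_one_mul {α A c Γ N : ℝ} (hA : 0 < A) (hΓ : 0 < Γ) (hN : 1 < N * c) (hNΓ : A < N * c * (1 + α) * Γ ^ α) :
    Γ < N * (c * sufficientDecrease α A (exp (1 / exp 1) * Γ)) := by
  set E := exp (1 / exp 1)
  have hE : 1 ≤ E := one_le_exp (by positivity)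
  have hEα : 1 + α ≤ E * E ^ α := by
    rw [← exp_mul, ← exp_add]
    convert le_exp_div_exp_one (1 + α) using 2
    ring
  have hNc : 0 ≤ N * c := by linarith
  have key : 1 < N * c * E * min 1 ((E * Γ) ^ α / A) := by
    rw [mul_rpow (by positivity) hΓ.le]
    rcases min_cases 1 (E ^ α * Γ ^ α / A) with ⟨h, -⟩ | ⟨h, -⟩ <;> rw [h]
    · nlinarith
    · calc 1 < N * c * (1 + α) * Γ ^ α / A := (one_lt_div hA).2 hNΓ
        _ ≤ N * c * (E * E ^ α) * Γ ^ α / A := by gcongr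
        _ = N * c * E * (E ^ α * Γ ^ α / A) := by ring
  calc Γ = Γ * 1 := (mul_one Γ).symm
    _ < Γ * (N * c * E * min 1 ((E * Γ) ^ α / A)) := by gcongr
    _ = N * (c * sufficientDecrease α A (E * Γ)) := by rw [sufficientDecrease]; ring

section Window

variable {γ β : ℕ → ℝ} {α A c : ℝ}

lemma mul_sufficientDecrease_le_sub (hα : 0 ≤ α) (hA : 0 ≤ A) (hc : 0 ≤ c) {x : ℝ} (hx : 0 ≤ x)
    (hrec : ∀ n, γ (n + 1) ≤ γ n - c * sufficientDecrease α A (β n)) (m N : ℕ)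
    (hβ : ∀ i < N, x ≤ β (m + i)) : N * (c * sufficientDecrease α A x) ≤ γ m - γ (m + N) := by
  induction N with
  | zero => simp
  | succ N ih =>
    have hN := mul_le_mul_of_nonneg_left
      (sufficientDecrease_le_sufficientDecrease hα hA hx (hβ N N.lt_succ_self)) hc
    rw [← add_assoc]
    push_cast
    linarith [hrec (m + N), ih fun i hi => hβ i (hi.trans N.lt_succ_self)]

lemma inf'_range_le_exp_inv_exp_one_mul (hα : 0 < α) (hA : 0 < A) (hc : 0 ≤ c)
    (hγ : ∀ n, 0 ≤ γ n) (hrec : ∀ n, γ (n + 1) ≤ γ n - c * sufficientDecrease α A (β n))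
    {k m N : ℕ} (hmN : m + N = k + 1) {D : ℝ} (hD : 0 < D) (hγm : γ m ^ α ≤ D⁻¹)
    (hN : 1 < N * c) (hND : A * D < N * c * (1 + α)) (hk : (range (k + 1)).Nonempty) :
    (range (k + 1)).inf' hk β ≤ exp (1 / exp 1) * (1 / D) ^ (1 / α) := by
  have hΓα : ((1 / D) ^ (1 / α)) ^ α = D⁻¹ := by
    rw [one_div, one_div, rpow_inv_rpow (by positivity) hα.ne']
  have hγΓ : γ m ≤ (1 / D) ^ (1 / α) := by
    rwa [one_div α, le_rpow_inv_iff_of_pos (hγ m) (by positivity) hα, one_div]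
  set Γ := (1 / D) ^ (1 / α)
  have hΓ : 0 < Γ := by positivity
  have hNΓ : A < N * c * (1 + α) * Γ ^ α := by
    rwa [hΓα, ← div_eq_mul_inv, lt_div_iff₀ hD]
  by_contra! hlt
  have hβ : ∀ i < N, exp (1 / exp 1) * Γ ≤ β (m + i) := fun i hi =>
    hlt.le.trans (inf'_le β (mem_range.2 (by omega)))
  have hsum := mul_sufficientDecrease_le_sub hα.le hA.le hc (by positivity) hrec m N hβ
  have hgain := lt_mul_sufficientDecrease_exp_inv_exp_one_mul hA hΓ hN hNΓ
  linarith [hγ (m + N)]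

end Window

lemma one_lt_mul_and_mul_lt_of_ge_add_two_mul_div {α A c x : ℝ} {k k₀ : ℕ} (hα : 0 ≤ α) (hA : 0 < A)
    (hc : 0 < c) (hx : 0 < x) (hxA : x ^ α ≤ A) (hk : (k : ℝ) ≥ k₀ + 2 * A / (c * x ^ α)) :
    1 < ((k + 1 - (k + k₀ + 1) / 2 : ℕ) : ℝ) * c ∧
      A * (x ^ (-α) + A⁻¹ * c * α * ((((k + k₀ + 1) / 2 : ℕ) : ℝ) - k₀)) <
        ((k + 1 - (k + k₀ + 1) / 2 : ℕ) : ℝ) * c * (1 + α) := by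
  set m := (k + k₀ + 1) / 2
  have hxα : 0 < x ^ α := rpow_pos_of_pos hx α
  have hTc : A / (c * x ^ α) * c = A * x ^ (-α) := by
    rw [rpow_neg hx.le]; field_simp
  set T := A / (c * x ^ α)
  rw [show 2 * A / (c * x ^ α) = 2 * T by ring] at hk
  have hk₀k : k₀ ≤ k := by
    have : 0 ≤ T := by positivity
    exact_mod_cast (by linarith : (k₀ : ℝ) ≤ k)
  have hTc₁ : 1 ≤ T * c := by
    rw [hTc, rpow_neg hx.le, ← div_eq_mul_inv, one_le_div hxα]; exact hxA
  have hm₁ : ((k + k₀ : ℕ) : ℝ) ≤ ((2 * m : ℕ) : ℝ) := by exact_mod_cast (by omega : k + k₀ ≤ 2 * m)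
  have hm₂ : ((2 * m : ℕ) : ℝ) ≤ ((k + k₀ + 1 : ℕ) : ℝ) := by exact_mod_cast Nat.mul_div_le _ 2
  have hN : ((k + 1 - m : ℕ) : ℝ) = k + 1 - m := by
    rw [Nat.cast_sub (by omega)]; push_cast; ring
  push_cast at hm₁ hm₂
  rw [hN]
  have hTN : T < k + 1 - m := by linarith
  have hTN' : T * c < (k + 1 - m) * c := mul_lt_mul_of_pos_right hTN hc
  refine ⟨by linarith, ?_⟩
  have hAD : A * (x ^ (-α) + A⁻¹ * c * α * (m - k₀)) = T * c + c * α * (m - k₀) := by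
    rw [hTc]; field_simp
  rw [hAD]
  nlinarith [mul_le_mul_of_nonneg_left (by linarith : (m : ℝ) - k₀ ≤ k + 1 - m)
    (mul_nonneg hc.le hα)]

theorem stmt5 (γ β : ℕ → ℝ) (hγ : ∀ k, 0 ≤ γ k) (hβ : ∀ k, 0 ≤ β k)
    (c α A : ℝ) (hc₀ : 0 < c) (hc₁ : c < 1) (hα : 0 < α) (hA : 0 < A)
    (hrec : ∀ k, γ (k + 1) ≤ γ k - c * β k * min 1 (β k ^ α / A))
    (hβγ : ∀ k, γ k ≤ β k)
    (k₀ : ℕ) (hk₀ : k₀ = ⌈(1 / c) * max (Real.log (γ 0 / (c * A ^ (1 / α)))) 0⌉₊) :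
    ∀ k : ℕ, (k : ℝ) ≥ (k₀ : ℝ) + 2 * A / (c * γ k₀ ^ α) →
      (Finset.range (k + 1)).inf' (Finset.nonempty_range_iff.mpr (Nat.succ_ne_zero k)) β
        ≤ Real.exp (1 / Real.exp 1) *
            (1 / (γ k₀ ^ (-α) + A⁻¹ * c * α * ((((k + k₀ + 1) / 2 : ℕ) : ℝ) - (k₀ : ℝ)))) ^ (1 / α) := by
  intro k hk
  have hrecβ : ∀ n, γ (n + 1) ≤ γ n - c * sufficientDecrease α A (β n) := fun n =>
    (hrec n).trans_eq (by rw [sufficientDecrease, mul_assoc])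
  have hrecγ : ∀ n, γ (n + 1) ≤ γ n - c * sufficientDecrease α A (γ n) := fun n =>
    (hrecβ n).trans (sub_le_sub_left (mul_le_mul_of_nonneg_left
      (sufficientDecrease_le_sufficientDecrease hα.le hA.le (hγ n) (hβγ n)) hc₀.le) _)
  have hk₀k : k₀ ≤ k := by
    have : 0 ≤ 2 * A / (c * γ k₀ ^ α) :=
      div_nonneg (by positivity) (mul_nonneg hc₀.le (rpow_nonneg (hγ k₀) α))
    exact_mod_cast (by linarith : (k₀ : ℝ) ≤ k)
  set m := (k + k₀ + 1) / 2
  have hk₀m : k₀ ≤ m := by omega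
  have hgap : 0 ≤ A⁻¹ * c * α * ((m : ℝ) - k₀) :=
    mul_nonneg (by positivity) (sub_nonneg.2 (by exact_mod_cast hk₀m))
  rcases (hγ k₀).eq_or_lt with h0 | hpos
  -- the bound is proved through `β k₀ = 0`, whatever junk value `0 ^ (-α)` takes on the right
  · have hβk₀ : β k₀ = 0 := by
      have : c * sufficientDecrease α A (β k₀) ≤ 0 := by linarith [hrecβ k₀, hγ (k₀ + 1)]
      exact ((hβ k₀).eq_or_lt.resolve_right fun h =>
        (mul_pos hc₀ (sufficientDecrease_pos hA h)).not_ge this).symm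
    calc _ ≤ β k₀ := inf'_le β (mem_range.2 (by omega))
      _ = 0 := hβk₀
      _ ≤ _ := mul_nonneg (exp_pos _).le <|
        rpow_nonneg (one_div_nonneg.2 (add_nonneg (rpow_nonneg (hγ k₀) _) hgap)) _
  · have hγk₀A : γ k₀ ^ α ≤ A := rpow_le_of_one_div_mul_max_log_le hα hA hc₀ hc₁.le hγ hrecγ
      (hk₀ ▸ Nat.le_ceil _)
    have hγm := rpow_le_inv_of_le_sub_sufficientDecrease (γ := fun j => γ (k₀ + j)) hα hA hc₀.le
      (fun j => hγ _) (fun j => hrecγ (k₀ + j)) (by simpa using hγk₀A) (rpow_pos_of_pos hpos (-α))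
      (by rw [add_zero, rpow_neg (hγ k₀), inv_inv]) (m - k₀)
    simp only [Nat.add_sub_cancel' hk₀m, Nat.cast_sub hk₀m] at hγm
    obtain ⟨hN, hND⟩ := one_lt_mul_and_mul_lt_of_ge_add_two_mul_div hα.le hA hc₀ hpos hγk₀A hk
    exact inf'_range_le_exp_inv_exp_one_mul hα hA hc₀.le hγ hrecβ (by omega)
      (add_pos_of_pos_of_nonneg (rpow_pos_of_pos hpos _) hgap) hγm hN hND _
end

section
/- Suppose each ∇h_i is ν-Hölder continuous on dom(G) with constant M_ν = max_i M_{i,ν}, each g_i is convex, and let s(x) minimize u ↦ max_i {g_i(u) − g_i(x) + ⟨∇h_i(x), u − x⟩} with optimal value θ(x). Then for every x ∈ dom(G) and t ∈ [0,1], componentwise F(x + t(s(x) − x)) ≤ F(x) + (t θ(x) + (M_ν/(1+ν)) t^{1+ν} ‖s(x) − x‖^{1+ν}) e, where e = (1,…,1). -/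
/-!
Convexity of `g i` bounds `g i` on the segment from `x` to `s(x)` by its chord. For `h i`, the
derivative of `s ↦ h i (x + s • v)` exceeds its value at `0` by at most `Mν ‖v‖^(1+ν) s^ν`
(Cauchy–Schwarz and the Hölder bound); integrating gives the `t^(1+ν) / (1+ν)` term. Adding the
two, the linear part `t (g i sx - g i x + ⟪h' i x, sx - x⟫)` is at most `t θx`.
-/

open scoped RealInnerProductSpace

open Set

theorem HasGradientAt.hasDerivAt_comp_add_smul {E : Type*} [NormedAddCommGroup E]
    [InnerProductSpace ℝ E] [CompleteSpace E] {f : E → ℝ} {f' x v : E} {s : ℝ}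
    (hf : HasGradientAt f f' (x + s • v)) :
    HasDerivAt (fun s : ℝ => f (x + s • v)) ⟪f', v⟫ s := by
  have hline : HasDerivAt (fun s : ℝ => x + s • v) v s := by
    simpa using ((hasDerivAt_id s).smul_const v).const_add x
  simpa [InnerProductSpace.toDual_apply_apply, Function.comp_def] using
    hf.hasFDerivAt.comp_hasDerivAt s hline

theorem le_add_mul_add_rpow_of_hasDerivAt {φ φ' : ℝ → ℝ} {M ν t : ℝ} (hν : 0 ≤ ν) (ht : 0 ≤ t)
    (hφ : ∀ s ∈ Icc 0 t, HasDerivAt φ (φ' s) s)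
    (hφ' : ∀ s ∈ Ioo 0 t, φ' s - φ' 0 ≤ M * s ^ ν) :
    φ t ≤ φ 0 + t * φ' 0 + M / (1 + ν) * t ^ (1 + ν) := by
  have hν₁ : (0 : ℝ) < 1 + ν := by linarith
  set ψ : ℝ → ℝ := fun s => φ s - s * φ' 0 - M / (1 + ν) * s ^ (1 + ν)
  have hψ : ∀ s ∈ Icc 0 t, HasDerivAt ψ (φ' s - φ' 0 - M * s ^ ν) s := by
    intro s hs
    have hpow := Real.hasDerivAt_rpow_const (x := s) (p := 1 + ν) (Or.inr (by linarith))
    refine (((hφ s hs).sub ((hasDerivAt_id s).mul_const (φ' 0))).sub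
      (hpow.const_mul (M / (1 + ν)))).congr_deriv ?_
    rw [add_sub_cancel_left]
    field_simp
  have hanti : AntitoneOn ψ (Icc 0 t) := by
    refine antitoneOn_of_hasDerivWithinAt_nonpos (f' := fun s => φ' s - φ' 0 - M * s ^ ν)
      (convex_Icc 0 t)
      (fun s hs => (hψ s hs).continuousAt.continuousWithinAt) (fun s hs => ?_) (fun s hs => ?_)
    all_goals rw [interior_Icc] at hs
    · exact (hψ s (Ioo_subset_Icc_self hs)).hasDerivWithinAt
    · linarith [hφ' s hs]
  have := hanti (left_mem_Icc.2 ht) (right_mem_Icc.2 ht) ht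
  simp only [ψ, Real.zero_rpow hν₁.ne', zero_mul, mul_zero, sub_zero] at this
  linarith

theorem ConvexOn.le_add_smul_sub {E : Type*} [AddCommGroup E] [Module ℝ E] {S : Set E}
    {g : E → ℝ} (hg : ConvexOn ℝ S g) {x y : E} (hx : x ∈ S) (hy : y ∈ S) {t : ℝ}
    (ht : t ∈ Icc (0 : ℝ) 1) :
    g (x + t • (y - x)) ≤ g x + t * (g y - g x) := by
  have := hg.2 hx hy (sub_nonneg.2 ht.2) ht.1 (by ring)
  rw [show (1 - t) • x + t • y = x + t • (y - x) by module, smul_eq_mul, smul_eq_mul] at this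
  linarith

theorem le_add_inner_add_of_holder_gradient {E : Type*} [NormedAddCommGroup E]
    [InnerProductSpace ℝ E] [CompleteSpace E] {f : E → ℝ} {f' : E → E} {x v : E} {M ν t : ℝ}
    (hν : 0 ≤ ν) (ht : 0 ≤ t) (hf : ∀ s ∈ Icc 0 t, HasGradientAt f (f' (x + s • v)) (x + s • v))
    (hf' : ∀ s ∈ Ioo 0 t, ‖f' (x + s • v) - f' x‖ ≤ M * ‖s • v‖ ^ ν) :
    f (x + t • v) ≤ f x + t * ⟪f' x, v⟫ + M / (1 + ν) * t ^ (1 + ν) * ‖v‖ ^ (1 + ν) := by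
  have hbound : ∀ s ∈ Ioo 0 t,
      ⟪f' (x + s • v), v⟫ - ⟪f' (x + (0 : ℝ) • v), v⟫ ≤ M * ‖v‖ ^ (1 + ν) * s ^ ν := by
    intro s hs
    calc ⟪f' (x + s • v), v⟫ - ⟪f' (x + (0 : ℝ) • v), v⟫
        = ⟪f' (x + s • v) - f' x, v⟫ := by rw [zero_smul, add_zero, inner_sub_left]
      _ ≤ ‖f' (x + s • v) - f' x‖ * ‖v‖ := real_inner_le_norm _ _
      _ ≤ M * ‖s • v‖ ^ ν * ‖v‖ := by gcongr; exact hf' s hs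
      _ = M * ‖v‖ ^ (1 + ν) * s ^ ν := by
        rw [norm_smul, Real.norm_of_nonneg hs.1.le, Real.mul_rpow hs.1.le (norm_nonneg v),
          Real.rpow_add' (norm_nonneg v) (by linarith), Real.rpow_one]
        ring
  have := le_add_mul_add_rpow_of_hasDerivAt hν ht
    (fun s hs => (hf s hs).hasDerivAt_comp_add_smul) hbound
  simp only [zero_smul, add_zero] at this
  linarith [show M * ‖v‖ ^ (1 + ν) / (1 + ν) * t ^ (1 + ν)
    = M / (1 + ν) * t ^ (1 + ν) * ‖v‖ ^ (1 + ν) by ring]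

theorem stmt8_general {n m : ℕ}
    (S : Set (EuclideanSpace ℝ (Fin n))) (hSconv : Convex ℝ S)
    (g h : Fin m → EuclideanSpace ℝ (Fin n) → ℝ)
    (h' : Fin m → EuclideanSpace ℝ (Fin n) → EuclideanSpace ℝ (Fin n))
    (hgconv : ∀ i, ConvexOn ℝ S (g i))
    (hgrad : ∀ i x, HasGradientAt (h i) (h' i x) x)
    (ν Mν : ℝ) (hν₀ : 0 < ν)
    (hHolder : ∀ i, ∀ x ∈ S, ∀ y ∈ S, ‖h' i x - h' i y‖ ≤ Mν * ‖x - y‖ ^ ν)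
    (x : EuclideanSpace ℝ (Fin n)) (hx : x ∈ S)
    (sx : EuclideanSpace ℝ (Fin n)) (hsx : sx ∈ S) (θx : ℝ)
    (hθval : θx = ⨆ i : Fin m, (g i sx - g i x + ⟪h' i x, sx - x⟫))
    (t : ℝ) (ht : t ∈ Set.Icc (0 : ℝ) 1) :
    ∀ i, g i (x + t • (sx - x)) + h i (x + t • (sx - x)) ≤
      g i x + h i x + (t * θx + Mν / (1 + ν) * t ^ (1 + ν) * ‖sx - x‖ ^ (1 + ν)) := by
  intro i
  have hseg : ∀ s ∈ Icc 0 t, x + s • (sx - x) ∈ S := fun s hs =>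
    hSconv.add_smul_sub_mem hx hsx ⟨hs.1, hs.2.trans ht.2⟩
  have hg := (hgconv i).le_add_smul_sub hx hsx ht
  have hh := le_add_inner_add_of_holder_gradient hν₀.le ht.1 (fun s _ => hgrad i _)
    fun s hs => by
      simpa only [add_sub_cancel_left] using hHolder i _ (hseg s (Ioo_subset_Icc_self hs)) x hx
  have hθ : g i sx - g i x + ⟪h' i x, sx - x⟫ ≤ θx :=
    hθval ▸ le_ciSup (f := fun j => g j sx - g j x + ⟪h' j x, sx - x⟫)
      (Set.finite_range _).bddAbove i
  nlinarith [ht.1]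

theorem stmt8 {n m : ℕ} (hm : 0 < m)
    (S : Set (EuclideanSpace ℝ (Fin n))) (hSconv : Convex ℝ S) (hScomp : IsCompact S)
    (g h : Fin m → EuclideanSpace ℝ (Fin n) → ℝ)
    (h' : Fin m → EuclideanSpace ℝ (Fin n) → EuclideanSpace ℝ (Fin n))
    (hgconv : ∀ i, ConvexOn ℝ S (g i))
    (hgrad : ∀ i x, HasGradientAt (h i) (h' i x) x)
    (ν Mν : ℝ) (hν₀ : 0 < ν) (hν₁ : ν ≤ 1) (hM : 0 < Mν)
    (hHolder : ∀ i, ∀ x ∈ S, ∀ y ∈ S, ‖h' i x - h' i y‖ ≤ Mν * ‖x - y‖ ^ ν)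
    (x : EuclideanSpace ℝ (Fin n)) (hx : x ∈ S)
    (sx : EuclideanSpace ℝ (Fin n)) (hsx : sx ∈ S) (θx : ℝ)
    (hθval : θx = ⨆ i : Fin m, (g i sx - g i x + ⟪h' i x, sx - x⟫))
    (hθopt : ∀ u ∈ S, θx ≤ ⨆ i : Fin m, (g i u - g i x + ⟪h' i x, u - x⟫))
    (t : ℝ) (ht : t ∈ Set.Icc (0 : ℝ) 1) :
    ∀ i, g i (x + t • (sx - x)) + h i (x + t • (sx - x)) ≤
      g i x + h i x + (t * θx + Mν / (1 + ν) * t ^ (1 + ν) * ‖sx - x‖ ^ (1 + ν)) :=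
  stmt8_general S hSconv g h h' hgconv hgrad ν Mν hν₀ hHolder x hx sx hsx θx hθval t ht
end

section
/- In the parameter-dependent generalized conditional gradient method, with step size t_k = min{1, (|θ(x^k)|/(M_ν ‖s(x^k) − x^k‖^{1+ν}))^{1/ν}} and update x^{k+1} = x^k + t_k(s(x^k) − x^k), each component f_i satisfies f_i(x^{k+1}) − f_i(x^k) ≤ −(ν/(1+ν)) |θ(x^k)| min{1, (−θ(x^k)/(M_ν ‖s(x^k) − x^k‖^{1+ν}))^{1/ν}}. -/
/-!
Along the segment from `x` to `s(x)`, the `ν`-Hölder continuity of `∇hᵢ` gives the descent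
inequality `hᵢ(x + t d) ≤ hᵢ(x) + t ⟪∇hᵢ(x), d⟫ + Mν ‖d‖^{1+ν} t^{1+ν} / (1+ν)`, and convexity
gives `gᵢ(x + t d) ≤ gᵢ(x) + t (gᵢ(s(x)) − gᵢ(x))`. Adding them, the linear term is at most `t θ(x)`
because `θ(x)` is the maximum over `i`. The step size is chosen so that
`Mν ‖d‖^{1+ν} t^{1+ν} ≤ t |θ(x)|`, which leaves the decrease `t θ(x) + t |θ(x)| / (1+ν)`.
-/

open scoped RealInnerProductSpace

lemma ConvexOn.add_smul_sub_le {E : Type*} [AddCommGroup E] [Module ℝ E] {S : Set E}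
    {g : E → ℝ} {x y : E} (hg : ConvexOn ℝ S g) (hx : x ∈ S) (hy : y ∈ S)
    {t : ℝ} (ht0 : 0 ≤ t) (ht1 : t ≤ 1) :
    g (x + t • (y - x)) ≤ g x + t * (g y - g x) := by
  have hcomb : x + t • (y - x) = (1 - t) • x + t • y := by module
  have := hg.2 hx hy (by linarith : (0 : ℝ) ≤ 1 - t) ht0 (by ring)
  rw [hcomb]
  simp only [smul_eq_mul] at this
  linarith

section HolderDescent

variable {E : Type*} [NormedAddCommGroup E] [InnerProductSpace ℝ E]
  {S : Set E} {h : E → ℝ} {h' : E → E} {ν M : ℝ} {x y : E}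

lemma inner_sub_le_of_holder (hS : Convex ℝ S) (hν : 0 ≤ ν)
    (hHolder : ∀ x ∈ S, ∀ y ∈ S, ‖h' x - h' y‖ ≤ M * ‖x - y‖ ^ ν)
    (hx : x ∈ S) (hy : y ∈ S) {s : ℝ} (hs : s ∈ Set.Icc (0 : ℝ) 1) :
    ⟪h' (x + s • (y - x)) - h' x, y - x⟫ ≤ M * ‖y - x‖ ^ (1 + ν) * s ^ ν := by
  have hdist : ‖x + s • (y - x) - x‖ = s * ‖y - x‖ := by
    rw [add_sub_cancel_left, norm_smul, Real.norm_of_nonneg hs.1]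
  have hH := hHolder _ (hS.add_smul_sub_mem hx hy hs) x hx
  rw [hdist, Real.mul_rpow hs.1 (norm_nonneg _)] at hH
  calc ⟪h' (x + s • (y - x)) - h' x, y - x⟫
      ≤ ‖h' (x + s • (y - x)) - h' x‖ * ‖y - x‖ := real_inner_le_norm _ _
    _ ≤ M * (s ^ ν * ‖y - x‖ ^ ν) * ‖y - x‖ := by gcongr
    _ = M * ‖y - x‖ ^ (1 + ν) * s ^ ν := by
      rw [Real.rpow_add' (norm_nonneg _) (by positivity), Real.rpow_one]; ring

variable [CompleteSpace E]

lemma HasGradientAt.hasDerivAt_add_smul_sub {g : E} {s : ℝ}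
    (hg : HasGradientAt h g (x + s • (y - x))) :
    HasDerivAt (fun s : ℝ => h (x + s • (y - x))) ⟪g, y - x⟫ s := by
  have hline : HasDerivAt (fun s : ℝ => x + s • (y - x)) (y - x) s := by
    simpa using ((hasDerivAt_id s).smul_const (y - x)).const_add x
  have hcomp := hg.hasFDerivAt.comp_hasDerivAt s hline
  simp only [InnerProductSpace.toDual_apply_apply] at hcomp
  exact hcomp

/-- The descent lemma for a function with `ν`-Hölder continuous gradient. -/
lemma sub_le_of_holder_gradient (hS : Convex ℝ S) (hgrad : ∀ z ∈ S, HasGradientAt h (h' z) z)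
    (hν : 0 ≤ ν) (hHolder : ∀ x ∈ S, ∀ y ∈ S, ‖h' x - h' y‖ ≤ M * ‖x - y‖ ^ ν)
    (hx : x ∈ S) (hy : y ∈ S) {t : ℝ} (ht0 : 0 ≤ t) (ht1 : t ≤ 1) :
    h (x + t • (y - x)) - h x ≤
      t * ⟪h' x, y - x⟫ + M * ‖y - x‖ ^ (1 + ν) / (1 + ν) * t ^ (1 + ν) := by
  set C := M * ‖y - x‖ ^ (1 + ν) / (1 + ν)
  set ψ : ℝ → ℝ := fun s => h (x + s • (y - x)) - s * ⟪h' x, y - x⟫ - C * s ^ (1 + ν)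
  have hψ : ∀ s ∈ Set.Icc (0 : ℝ) 1, HasDerivAt ψ
      (⟪h' (x + s • (y - x)), y - x⟫ - ⟪h' x, y - x⟫ - C * ((1 + ν) * s ^ ν)) s := by
    intro s hs
    have hpow : HasDerivAt (fun s : ℝ => s ^ (1 + ν)) ((1 + ν) * s ^ ν) s := by
      simpa using Real.hasDerivAt_rpow_const (x := s) (p := 1 + ν) (Or.inr (by linarith))
    exact (((hgrad _ (hS.add_smul_sub_mem hx hy hs)).hasDerivAt_add_smul_sub).sub
      (hasDerivAt_mul_const _)).sub (hpow.const_mul C)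
  have hsub : Set.Icc 0 t ⊆ Set.Icc (0 : ℝ) 1 := Set.Icc_subset_Icc_right ht1
  -- `ψ' s = ⟪h' (x + s d) - h' x, d⟫ - M ‖d‖^{1+ν} s^ν ≤ 0` by Hölder continuity.
  have hanti : AntitoneOn ψ (Set.Icc 0 t) := by
    refine antitoneOn_of_deriv_nonpos (convex_Icc 0 t)
      (fun s hs => (hψ s (hsub hs)).continuousAt.continuousWithinAt)
      (fun s hs => (hψ s (hsub (interior_subset hs))).differentiableAt.differentiableWithinAt)
      fun s hs => ?_
    have hs' := hsub (interior_subset hs)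
    have hC : C * ((1 + ν) * s ^ ν) = M * ‖y - x‖ ^ (1 + ν) * s ^ ν := by
      simp only [C]; field_simp
    rw [(hψ s hs').deriv, hC, ← inner_sub_left, sub_nonpos]
    exact inner_sub_le_of_holder hS hν hHolder hx hy hs'
  have hψt := hanti (Set.left_mem_Icc.2 ht0) (Set.right_mem_Icc.2 ht0) ht0
  simp only [ψ, zero_smul, add_zero, zero_mul, sub_zero,
    Real.zero_rpow (by linarith : (1 : ℝ) + ν ≠ 0), mul_zero] at hψt
  linarith

lemma add_sub_add_le_of_convex_of_holder_gradient {g : E → ℝ} (hS : Convex ℝ S)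
    (hg : ConvexOn ℝ S g) (hgrad : ∀ z ∈ S, HasGradientAt h (h' z) z) (hν : 0 ≤ ν)
    (hHolder : ∀ x ∈ S, ∀ y ∈ S, ‖h' x - h' y‖ ≤ M * ‖x - y‖ ^ ν)
    (hx : x ∈ S) (hy : y ∈ S) {t : ℝ} (ht0 : 0 ≤ t) (ht1 : t ≤ 1) :
    (g (x + t • (y - x)) + h (x + t • (y - x))) - (g x + h x) ≤
      t * (g y - g x + ⟪h' x, y - x⟫) + M * ‖y - x‖ ^ (1 + ν) / (1 + ν) * t ^ (1 + ν) := by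
  have hconv := hg.add_smul_sub_le hx hy ht0 ht1
  have hdesc := sub_le_of_holder_gradient hS hgrad hν hHolder hx hy ht0 ht1
  linarith

end HolderDescent

lemma mul_rpow_one_add_le_of_le_rpow_inv {a A ν t : ℝ} (ha : 0 ≤ a) (hA : 0 < A) (hν : 0 < ν)
    (ht0 : 0 ≤ t) (ht : t ≤ (a / A) ^ (1 / ν)) :
    A * t ^ (1 + ν) ≤ a * t := by
  have htν : t ^ ν ≤ a / A := by
    calc t ^ ν ≤ ((a / A) ^ (1 / ν)) ^ ν := Real.rpow_le_rpow ht0 ht hν.le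
      _ = a / A := by
        rw [← Real.rpow_mul (div_nonneg ha hA.le), one_div_mul_cancel hν.ne', Real.rpow_one]
  calc A * t ^ (1 + ν) = t * (A * t ^ ν) := by
        rw [Real.rpow_add' ht0 (by linarith), Real.rpow_one]; ring
    _ ≤ t * a := by gcongr; exact (le_div_iff₀' hA).mp htν
    _ = a * t := mul_comm t a

theorem stmt9_general {n m : ℕ}
    (S : Set (EuclideanSpace ℝ (Fin n))) (hSconv : Convex ℝ S)
    (g h : Fin m → EuclideanSpace ℝ (Fin n) → ℝ)
    (h' : Fin m → EuclideanSpace ℝ (Fin n) → EuclideanSpace ℝ (Fin n))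
    (hgconv : ∀ i, ConvexOn ℝ S (g i))
    (hgrad : ∀ i x, HasGradientAt (h i) (h' i x) x)
    (ν Mν : ℝ) (hν₀ : 0 < ν) (hM : 0 < Mν)
    (hHolder : ∀ i, ∀ x ∈ S, ∀ y ∈ S, ‖h' i x - h' i y‖ ≤ Mν * ‖x - y‖ ^ ν)
    (x : EuclideanSpace ℝ (Fin n)) (hx : x ∈ S)
    (sx : EuclideanSpace ℝ (Fin n)) (hsx : sx ∈ S) (hne : sx ≠ x) (θx : ℝ) (hθneg : θx < 0)
    (hθval : θx = ⨆ i : Fin m, (g i sx - g i x + ⟪h' i x, sx - x⟫))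
    (t : ℝ) (ht : t = min 1 ((|θx| / (Mν * ‖sx - x‖ ^ (1 + ν))) ^ (1 / ν))) :
    ∀ i, (g i (x + t • (sx - x)) + h i (x + t • (sx - x))) - (g i x + h i x) ≤
      -(ν / (1 + ν)) * |θx| * min 1 ((-θx / (Mν * ‖sx - x‖ ^ (1 + ν))) ^ (1 / ν)) := by
  intro i
  set A := Mν * ‖sx - x‖ ^ (1 + ν)
  have hA : 0 < A := by have := norm_sub_pos_iff.mpr hne; positivity
  have hratio : 0 ≤ -θx / A := div_nonneg (neg_nonneg.2 hθneg.le) hA.le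
  rw [abs_of_neg hθneg] at ht ⊢
  rw [← ht]
  have ht0 : 0 ≤ t := ht ▸ le_min zero_le_one (Real.rpow_nonneg hratio _)
  have ht1 : t ≤ 1 := ht ▸ min_le_left _ _
  have hθi : g i sx - g i x + ⟪h' i x, sx - x⟫ ≤ θx :=
    hθval ▸ le_ciSup (f := fun j => g j sx - g j x + ⟪h' j x, sx - x⟫)
      (Set.finite_range _).bddAbove i
  have hstep := add_sub_add_le_of_convex_of_holder_gradient hSconv (hgconv i)
    (fun z _ => hgrad i z) hν₀.le (hHolder i) hx hsx ht0 ht1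
  have hpow := mul_rpow_one_add_le_of_le_rpow_inv (neg_nonneg.2 hθneg.le) hA hν₀ ht0
    (ht ▸ min_le_right _ _)
  calc _ ≤ t * (g i sx - g i x + ⟪h' i x, sx - x⟫) + A / (1 + ν) * t ^ (1 + ν) := hstep
    _ ≤ t * θx + A / (1 + ν) * t ^ (1 + ν) := by gcongr
    _ ≤ t * θx + -θx * t / (1 + ν) := by rw [div_mul_eq_mul_div]; gcongr
    _ = -(ν / (1 + ν)) * -θx * t := by field_simp; ring

theorem stmt9 {n m : ℕ} (hm : 0 < m)
    (S : Set (EuclideanSpace ℝ (Fin n))) (hSconv : Convex ℝ S) (hScomp : IsCompact S)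
    (g h : Fin m → EuclideanSpace ℝ (Fin n) → ℝ)
    (h' : Fin m → EuclideanSpace ℝ (Fin n) → EuclideanSpace ℝ (Fin n))
    (hgconv : ∀ i, ConvexOn ℝ S (g i))
    (hgrad : ∀ i x, HasGradientAt (h i) (h' i x) x)
    (ν Mν : ℝ) (hν₀ : 0 < ν) (hν₁ : ν ≤ 1) (hM : 0 < Mν)
    (hHolder : ∀ i, ∀ x ∈ S, ∀ y ∈ S, ‖h' i x - h' i y‖ ≤ Mν * ‖x - y‖ ^ ν)
    (x : EuclideanSpace ℝ (Fin n)) (hx : x ∈ S)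
    (sx : EuclideanSpace ℝ (Fin n)) (hsx : sx ∈ S) (hne : sx ≠ x) (θx : ℝ) (hθneg : θx < 0)
    (hθval : θx = ⨆ i : Fin m, (g i sx - g i x + ⟪h' i x, sx - x⟫))
    (hθopt : ∀ u ∈ S, θx ≤ ⨆ i : Fin m, (g i u - g i x + ⟪h' i x, u - x⟫))
    (t : ℝ) (ht : t = min 1 ((|θx| / (Mν * ‖sx - x‖ ^ (1 + ν))) ^ (1 / ν))) :
    ∀ i, (g i (x + t • (sx - x)) + h i (x + t • (sx - x))) - (g i x + h i x) ≤
      -(ν / (1 + ν)) * |θx| * min 1 ((-θx / (Mν * ‖sx - x‖ ^ (1 + ν))) ^ (1 / ν)) :=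
  stmt9_general S hSconv g h h' hgconv hgrad ν Mν hν₀ hM hHolder x hx sx hsx hne θx hθneg hθval t ht
end

section
/- Under assumption (A1) (each ∇h_i ν-Hölder with constant ≤ M_ν on dom(G), ν ∈ (0,1]) and with dom(G) of diameter D, the sequence (x^k) generated by the parameter-dependent conditional gradient method satisfies min_{0≤j≤k} |θ(x^j)| ≤ max{ (1+ν)(f₀^max − f^inf)/(ν(k+1)), ((1+ν) M_ν^{1/ν} D^{(1+ν)/ν} (f₀^max − f^inf)/(ν(k+1)))^{ν/(1+ν)} }, where f₀^max = max_i f_i(x⁰) and f^inf = min_i inf_{x ∈ dom(G)} f_i(x). -/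
/-!
Along the segment from `x` to `y`, the gap between `h` and its linear model has derivative
`⟪∇h(x + t(y - x)) - ∇h x, y - x⟫ ≤ M t^ν ‖y - x‖^(1+ν)`, which gives the Hölder descent inequality
`h y ≤ h x + ⟪∇h x, y - x⟫ + M/(1+ν) ‖y - x‖^(1+ν)`. With convexity of `g_i`, the step
`x + t (s - x)` lowers every `f_i` below `max_i f_i(x) + tθ + M t^(1+ν) ‖s - x‖^(1+ν)/(1+ν)`, and the
chosen `t` makes this at most `max_i f_i(x) - ν/(1+ν) · min{|θ|, |θ|^((1+ν)/ν) / (M^(1/ν) D^((1+ν)/ν))}`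
(the two terms of the minimum are the regimes `t = 1` and `t < 1`). Telescoping, `k + 1` such
decreases add up to at most `f₀^max - f^inf`; since the minimum is monotone in `|θ|`, it is at most
`(1+ν)(f₀^max - f^inf)/(ν(k+1))` at the smallest `|θ(x^j)|`, and inverting it gives the bound.
-/

open Finset Set
open scoped RealInnerProductSpace

noncomputable def holderStepsize (ν M Δ d : ℝ) : ℝ := min 1 ((Δ / (M * d ^ (1 + ν))) ^ (1 / ν))

noncomputable def holderDecrease (ν K Δ : ℝ) : ℝ := min Δ (Δ ^ ((1 + ν) / ν) / K)

section Scalar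

variable {ν M K Δ d D : ℝ}

theorem holderStepsize_nonneg (hΔ : 0 ≤ Δ) (hM : 0 ≤ M) (hd : 0 ≤ d) :
    0 ≤ holderStepsize ν M Δ d :=
  le_min zero_le_one (Real.rpow_nonneg (by positivity) _)

theorem holderStepsize_le_one : holderStepsize ν M Δ d ≤ 1 := min_le_left _ _

theorem holderStepsize_rpow_mul_le (hν : 0 < ν) (hΔ : 0 ≤ Δ) (hM : 0 ≤ M) (hd : 0 ≤ d) :
    holderStepsize ν M Δ d ^ ν * (M * d ^ (1 + ν)) ≤ Δ := by
  rcases (show 0 ≤ M * d ^ (1 + ν) by positivity).eq_or_lt with hC | hC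
  · rw [← hC, mul_zero]; exact hΔ
  have ht : holderStepsize ν M Δ d ^ ν ≤ ((Δ / (M * d ^ (1 + ν))) ^ (1 / ν)) ^ ν :=
    Real.rpow_le_rpow (holderStepsize_nonneg hΔ hM hd) (min_le_right _ _) hν.le
  rw [← Real.rpow_mul (by positivity), one_div_mul_cancel hν.ne', Real.rpow_one] at ht
  exact (le_div_iff₀ hC).1 ht

theorem holderDecrease_mono (hν : 0 < ν) (hK : 0 ≤ K) {Δ Δ' : ℝ} (hΔ : 0 ≤ Δ) (h : Δ ≤ Δ') :
    holderDecrease ν K Δ ≤ holderDecrease ν K Δ' :=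
  min_le_min h (by gcongr)

theorem holderDecrease_le_holderStepsize_mul (hν : 0 < ν) (hM : 0 < M) (hΔ : 0 ≤ Δ)
    (hd : 0 < Δ → 0 < d) (hdD : d ≤ D) :
    holderDecrease ν (M ^ (1 / ν) * D ^ ((1 + ν) / ν)) Δ ≤ holderStepsize ν M Δ d * Δ := by
  rcases hΔ.eq_or_lt with rfl | hΔ
  · simp [holderDecrease, Real.zero_rpow (by positivity : (1 + ν) / ν ≠ 0)]
  have hd := hd hΔ
  have hC : 0 < M * d ^ (1 + ν) := by positivity
  have hCK : (M * d ^ (1 + ν)) ^ (1 / ν) ≤ M ^ (1 / ν) * D ^ ((1 + ν) / ν) := by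
    rw [Real.mul_rpow hM.le (by positivity), ← Real.rpow_mul hd.le, mul_one_div]
    gcongr
  have hr : (Δ / (M * d ^ (1 + ν))) ^ (1 / ν) * Δ
      = Δ ^ ((1 + ν) / ν) / (M * d ^ (1 + ν)) ^ (1 / ν) := by
    rw [Real.div_rpow hΔ.le hC.le, add_div, div_self hν.ne', add_comm, Real.rpow_add_one hΔ.ne']
    ring
  rw [holderDecrease, holderStepsize, min_mul_of_nonneg _ _ hΔ.le, one_mul, hr]
  exact min_le_min le_rfl (div_le_div_of_nonneg_left (by positivity) (by positivity) hCK)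

theorem mul_neg_add_rpow_le (hν : 0 < ν) {t C : ℝ} (ht : 0 ≤ t) (hC : t ^ ν * C ≤ Δ) :
    t * -Δ + C / (1 + ν) * t ^ (1 + ν) ≤ -(ν / (1 + ν) * (t * Δ)) := by
  have h : C * t ^ (1 + ν) ≤ t * Δ := by
    rw [Real.rpow_one_add' ht (by linarith)]
    nlinarith
  have h' : C / (1 + ν) * t ^ (1 + ν) ≤ t * Δ / (1 + ν) := by
    rw [div_mul_eq_mul_div]; gcongr
  have e : t * -Δ + t * Δ / (1 + ν) = -(ν / (1 + ν) * (t * Δ)) := by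
    field_simp; ring
  linarith

theorem le_max_of_holderDecrease_le (hν : 0 < ν) (hK : 0 < K) {a B : ℝ} (ha : 0 ≤ a)
    (h : holderDecrease ν K a ≤ B) : a ≤ max B ((B * K) ^ (ν / (1 + ν))) := by
  rcases min_le_iff.1 h with h | h
  · exact le_max_of_le_left h
  · refine le_max_of_le_right ?_
    rw [div_le_iff₀ hK] at h
    calc a = (a ^ ((1 + ν) / ν)) ^ ((1 + ν) / ν)⁻¹ := (Real.rpow_rpow_inv ha (by positivity)).symm
      _ ≤ (B * K) ^ (ν / (1 + ν)) := by rw [inv_div]; gcongr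

end Scalar

section InnerProductSpace

variable {E : Type*} [NormedAddCommGroup E] [InnerProductSpace ℝ E] [CompleteSpace E]

theorem le_add_inner_add_rpow_of_holder_gradient {S : Set E} (hS : Convex ℝ S)
    {h : E → ℝ} {h' : E → E} (hgrad : ∀ x ∈ S, HasGradientAt h (h' x) x) {ν M : ℝ} (hν : 0 < ν)
    (hHolder : ∀ x ∈ S, ∀ y ∈ S, ‖h' x - h' y‖ ≤ M * ‖x - y‖ ^ ν)
    {x y : E} (hx : x ∈ S) (hy : y ∈ S) :
    h y ≤ h x + ⟪h' x, y - x⟫ + M / (1 + ν) * ‖y - x‖ ^ (1 + ν) := by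
  set d := y - x
  have hseg : ∀ t ∈ Icc (0 : ℝ) 1, x + t • d ∈ S := fun t ht => hS.add_smul_sub_mem hx hy ht
  set φ : ℝ → ℝ := fun t =>
    h (x + t • d) - t * ⟪h' x, d⟫ - M / (1 + ν) * ‖d‖ ^ (1 + ν) * t ^ (1 + ν)
  have hφ : ∀ t ∈ Icc (0 : ℝ) 1, HasDerivAt φ
      (⟪h' (x + t • d), d⟫ - ⟪h' x, d⟫ - M * ‖d‖ ^ (1 + ν) * t ^ ν) t := by
    intro t ht
    have hline : HasDerivAt (fun t : ℝ => x + t • d) d t := by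
      simpa using ((hasDerivAt_id t).smul_const d).const_add x
    have hh := (hgrad _ (hseg t ht)).hasFDerivAt.comp_hasDerivAt t hline
    have hpow := Real.hasDerivAt_rpow_const (x := t) (p := 1 + ν) (Or.inr (by linarith))
    refine ((hh.sub ((hasDerivAt_id t).mul_const ⟪h' x, d⟫)).sub
      (hpow.const_mul (M / (1 + ν) * ‖d‖ ^ (1 + ν)))).congr_deriv ?_
    rw [InnerProductSpace.toDual_apply_apply, add_sub_cancel_left]
    field_simp
  have hφ' : ∀ t ∈ Icc (0 : ℝ) 1,
      ⟪h' (x + t • d), d⟫ - ⟪h' x, d⟫ - M * ‖d‖ ^ (1 + ν) * t ^ ν ≤ 0 := by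
    intro t ht
    have key : ⟪h' (x + t • d), d⟫ - ⟪h' x, d⟫ ≤ M * ‖d‖ ^ (1 + ν) * t ^ ν := calc
      ⟪h' (x + t • d), d⟫ - ⟪h' x, d⟫ = ⟪h' (x + t • d) - h' x, d⟫ := (inner_sub_left _ _ _).symm
      _ ≤ ‖h' (x + t • d) - h' x‖ * ‖d‖ := real_inner_le_norm _ _
      _ ≤ M * ‖x + t • d - x‖ ^ ν * ‖d‖ := by gcongr; exact hHolder _ (hseg t ht) _ hx
      _ = M * ‖d‖ ^ (1 + ν) * t ^ ν := by
        rw [add_sub_cancel_left, norm_smul, Real.norm_of_nonneg ht.1,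
          Real.mul_rpow ht.1 (norm_nonneg d), Real.rpow_one_add' (norm_nonneg d) (by linarith)]
        ring
    linarith
  have hanti : AntitoneOn φ (Icc 0 1) := by
    refine antitoneOn_of_hasDerivWithinAt_nonpos (convex_Icc 0 1)
      (f' := fun t => ⟪h' (x + t • d), d⟫ - ⟪h' x, d⟫ - M * ‖d‖ ^ (1 + ν) * t ^ ν)
      (fun t ht => (hφ t ht).continuousAt.continuousWithinAt) (fun t ht => ?_) (fun t ht => ?_)
    all_goals rw [interior_Icc] at ht
    · exact (hφ t (Ioo_subset_Icc_self ht)).hasDerivWithinAt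
    · exact hφ' t (Ioo_subset_Icc_self ht)
  have := hanti (left_mem_Icc.2 zero_le_one) (right_mem_Icc.2 zero_le_one) zero_le_one
  simp only [φ, zero_smul, add_zero, one_smul, zero_mul, sub_zero, one_mul, Real.one_rpow,
    Real.zero_rpow (by linarith : (1 : ℝ) + ν ≠ 0), mul_zero, d, add_sub_cancel] at this
  linarith

theorem add_le_sub_holderDecrease_of_holderStep {S : Set E} (hS : Convex ℝ S) {g h : E → ℝ}
    {h' : E → E} (hg : ConvexOn ℝ S g) (hgrad : ∀ x ∈ S, HasGradientAt h (h' x) x)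
    {ν M D : ℝ} (hν : 0 < ν) (hM : 0 < M)
    (hHolder : ∀ x ∈ S, ∀ y ∈ S, ‖h' x - h' y‖ ≤ M * ‖x - y‖ ^ ν)
    {x s : E} (hx : x ∈ S) (hs : s ∈ S) (hsx : ‖s - x‖ ≤ D) {c θ : ℝ} (hc : g x + h x ≤ c)
    (hθ : g s - g x + ⟪h' x, s - x⟫ ≤ θ) (hθ₀ : θ ≤ 0) :
    let y := x + holderStepsize ν M |θ| ‖s - x‖ • (s - x)
    g y + h y ≤ c - ν / (1 + ν) * holderDecrease ν (M ^ (1 / ν) * D ^ ((1 + ν) / ν)) |θ| := by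
  intro y
  set t := holderStepsize ν M |θ| ‖s - x‖
  have ht₀ : 0 ≤ t := holderStepsize_nonneg (abs_nonneg θ) hM.le (norm_nonneg _)
  have ht₁ : t ≤ 1 := holderStepsize_le_one
  have hyS : y ∈ S := hS.add_smul_sub_mem hx hs ⟨ht₀, ht₁⟩
  have hgy : g y ≤ (1 - t) * g x + t * g s := by
    have := hg.2 hx hs (sub_nonneg.2 ht₁) ht₀ (sub_add_cancel 1 t)
    rwa [show (1 - t) • x + t • s = y by simp only [y]; module] at this
  have hhy := le_add_inner_add_rpow_of_holder_gradient hS hgrad hν hHolder hx hyS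
  rw [show y - x = t • (s - x) by simp only [y]; abel, real_inner_smul_right, norm_smul,
    Real.norm_of_nonneg ht₀, Real.mul_rpow ht₀ (norm_nonneg _)] at hhy
  have hstep := mul_neg_add_rpow_le hν ht₀
    (holderStepsize_rpow_mul_le hν (abs_nonneg θ) hM.le (norm_nonneg (s - x)))
  have hpos : 0 < |θ| → 0 < ‖s - x‖ := by
    intro hθpos
    refine norm_pos_iff.2 (sub_ne_zero.2 fun hsx => ?_)
    simp only [hsx, sub_self, inner_zero_right, add_zero] at hθ
    exact hθpos.ne' (abs_of_nonpos hθ₀ ▸ by linarith)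
  have hdecr : holderDecrease ν (M ^ (1 / ν) * D ^ ((1 + ν) / ν)) |θ| ≤ t * |θ| :=
    holderDecrease_le_holderStepsize_mul hν hM (abs_nonneg θ) hpos hsx
  have hθt := mul_le_mul_of_nonneg_left hθ ht₀
  have hdecr' := mul_le_mul_of_nonneg_left hdecr (by positivity : 0 ≤ ν / (1 + ν))
  rw [← neg_neg θ, ← abs_of_nonpos hθ₀] at hθt
  linear_combination hgy + hhy + hc + hθt + hstep + hdecr'

end InnerProductSpace

theorem sum_range_le_sub_of_le_sub {u c : ℕ → ℝ} (h : ∀ j, u (j + 1) ≤ u j - c j) (k : ℕ) :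
    ∑ j ∈ range k, c j ≤ u 0 - u k :=
  (sum_le_sum fun j _ => by linarith [h j]).trans_eq (sum_range_sub' u k)

theorem inf'_le_max_of_sum_holderDecrease_le {ν K R : ℝ} (hν : 0 < ν) (hK : 0 < K) {a : ℕ → ℝ}
    (ha : ∀ j, 0 ≤ a j) (k : ℕ)
    (hsum : ∑ j ∈ range (k + 1), ν / (1 + ν) * holderDecrease ν K (a j) ≤ R) :
    (range (k + 1)).inf' (nonempty_range_iff.mpr (Nat.succ_ne_zero k)) a
      ≤ max ((1 + ν) * R / (ν * (k + 1))) (((1 + ν) * K * R / (ν * (k + 1))) ^ (ν / (1 + ν))) := by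
  set a₀ := (range (k + 1)).inf' (nonempty_range_iff.mpr (Nat.succ_ne_zero k)) a
  have ha₀ : 0 ≤ a₀ := le_inf' _ _ fun j _ => ha j
  have hcard : (k + 1) * (ν / (1 + ν) * holderDecrease ν K a₀) ≤ R := by
    refine le_trans ?_ hsum
    simpa using card_nsmul_le_sum _ _ _ fun j hj =>
      mul_le_mul_of_nonneg_left (holderDecrease_mono hν hK.le ha₀ (inf'_le _ hj))
        (by positivity : 0 ≤ ν / (1 + ν))
  have hB : holderDecrease ν K a₀ ≤ (1 + ν) * R / (ν * (k + 1)) := by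
    rw [le_div_iff₀ (by positivity)]
    field_simp at hcard
    linarith
  convert le_max_of_holderDecrease_le hν hK ha₀ hB using 3
  ring

theorem stmt12_general {n m : ℕ} (hm : 0 < m)
    (S : Set (EuclideanSpace ℝ (Fin n))) (hSconv : Convex ℝ S)
    (g h : Fin m → EuclideanSpace ℝ (Fin n) → ℝ)
    (h' : Fin m → EuclideanSpace ℝ (Fin n) → EuclideanSpace ℝ (Fin n))
    (hgconv : ∀ i, ConvexOn ℝ S (g i))
    (hgrad : ∀ i x, HasGradientAt (h i) (h' i x) x)
    (ν Mν : ℝ) (hν₀ : 0 < ν) (hM : 0 < Mν)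
    (hHolder : ∀ i, ∀ x ∈ S, ∀ y ∈ S, ‖h' i x - h' i y‖ ≤ Mν * ‖x - y‖ ^ ν)
    (D : ℝ) (hD : ∀ x ∈ S, ∀ y ∈ S, ‖x - y‖ ≤ D)
    (x s : ℕ → EuclideanSpace ℝ (Fin n)) (θ : ℕ → ℝ)
    (hxS : ∀ k, x k ∈ S) (hsS : ∀ k, s k ∈ S)
    (hθval : ∀ k, θ k = ⨆ i : Fin m, (g i (s k) - g i (x k) + ⟪h' i (x k), s k - x k⟫))
    (hθopt : ∀ k, ∀ u ∈ S, θ k ≤ ⨆ i : Fin m, (g i u - g i (x k) + ⟪h' i (x k), u - x k⟫))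
    (hstep : ∀ k, x (k + 1) =
      x k + (min 1 ((|θ k| / (Mν * ‖s k - x k‖ ^ (1 + ν))) ^ (1 / ν))) • (s k - x k))
    (f0max finf : ℝ)
    (hf0 : f0max = ⨆ i : Fin m, (g i (x 0) + h i (x 0)))
    (hfinf : ∀ i, ∀ u ∈ S, finf ≤ g i u + h i u) :
    ∀ k : ℕ,
      (Finset.range (k + 1)).inf' (Finset.nonempty_range_iff.mpr (Nat.succ_ne_zero k))
          (fun j => |θ j|)
        ≤ max ((1 + ν) * (f0max - finf) / (ν * (k + 1)))
            (((1 + ν) * Mν ^ (1 / ν) * D ^ ((1 + ν) / ν) * (f0max - finf) / (ν * (k + 1)))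
              ^ (ν / (1 + ν))) := by
  have : Nonempty (Fin m) := ⟨⟨0, hm⟩⟩
  have bdd (f : Fin m → ℝ) : BddAbove (Set.range f) := (Set.finite_range f).bddAbove
  set K := Mν ^ (1 / ν) * D ^ ((1 + ν) / ν)
  set F : ℕ → ℝ := fun k => ⨆ i, (g i (x k) + h i (x k))
  have hF (k : ℕ) (i : Fin m) : g i (x k) + h i (x k) ≤ F k :=
    le_ciSup (bdd fun i => g i (x k) + h i (x k)) i
  have hθ₀ (k : ℕ) : θ k ≤ 0 := (hθopt k (x k) (hxS k)).trans (by simp)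
  have hdecr (k : ℕ) : F (k + 1) ≤ F k - ν / (1 + ν) * holderDecrease ν K |θ k| :=
    ciSup_le fun i => by
      rw [hstep k]
      exact add_le_sub_holderDecrease_of_holderStep hSconv (hgconv i) (fun y _ => hgrad i y) hν₀
        hM (hHolder i) (hxS k) (hsS k) (hD _ (hsS k) _ (hxS k)) (hF k i)
        ((le_ciSup (bdd _) i).trans_eq (hθval k).symm) (hθ₀ k)
  have hFinf (k : ℕ) : finf ≤ F k := (hfinf ⟨0, hm⟩ _ (hxS k)).trans (hF k _)
  have hsum (k : ℕ) : ∑ j ∈ range (k + 1), ν / (1 + ν) * holderDecrease ν K |θ j| ≤ f0max - finf :=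
    (sum_range_le_sub_of_le_sub hdecr (k + 1)).trans (by rw [hf0]; linarith [hFinf (k + 1)])
  intro k
  rcases (norm_nonneg _ |>.trans (hD _ (hxS 0) _ (hxS 0))).eq_or_lt with hD0 | hDpos
  · have hsx : s 0 = x 0 := sub_eq_zero.1 (norm_le_zero_iff.1 (hD0 ▸ hD _ (hsS 0) _ (hxS 0)))
    have hθ0 : θ 0 = 0 := by simp [hθval, hsx]
    refine (inf'_le _ (mem_range.2 k.succ_pos)).trans (le_max_of_le_left ?_)
    rw [hθ0, abs_zero]
    exact div_nonneg (mul_nonneg (by linarith) (by rw [hf0]; linarith [hFinf 0]))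
      (by positivity)
  · simpa only [K, mul_assoc] using inf'_le_max_of_sum_holderDecrease_le hν₀ (by positivity)
      (fun j => abs_nonneg (θ j)) k (hsum k)

theorem stmt12 {n m : ℕ} (hm : 0 < m)
    (S : Set (EuclideanSpace ℝ (Fin n))) (hSconv : Convex ℝ S) (hScomp : IsCompact S)
    (g h : Fin m → EuclideanSpace ℝ (Fin n) → ℝ)
    (h' : Fin m → EuclideanSpace ℝ (Fin n) → EuclideanSpace ℝ (Fin n))
    (hgconv : ∀ i, ConvexOn ℝ S (g i))
    (hglsc : ∀ i, LowerSemicontinuousOn (g i) S)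
    (hgrad : ∀ i x, HasGradientAt (h i) (h' i x) x)
    (ν Mν : ℝ) (hν₀ : 0 < ν) (hν₁ : ν ≤ 1) (hM : 0 < Mν)
    (hHolder : ∀ i, ∀ x ∈ S, ∀ y ∈ S, ‖h' i x - h' i y‖ ≤ Mν * ‖x - y‖ ^ ν)
    (D : ℝ) (hD : ∀ x ∈ S, ∀ y ∈ S, ‖x - y‖ ≤ D)
    (x s : ℕ → EuclideanSpace ℝ (Fin n)) (θ : ℕ → ℝ)
    (hxS : ∀ k, x k ∈ S) (hsS : ∀ k, s k ∈ S)
    (hθval : ∀ k, θ k = ⨆ i : Fin m, (g i (s k) - g i (x k) + ⟪h' i (x k), s k - x k⟫))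
    (hθopt : ∀ k, ∀ u ∈ S, θ k ≤ ⨆ i : Fin m, (g i u - g i (x k) + ⟪h' i (x k), u - x k⟫))
    (hstep : ∀ k, x (k + 1) =
      x k + (min 1 ((|θ k| / (Mν * ‖s k - x k‖ ^ (1 + ν))) ^ (1 / ν))) • (s k - x k))
    (f0max finf : ℝ)
    (hf0 : f0max = ⨆ i : Fin m, (g i (x 0) + h i (x 0)))
    (hfinf : ∀ i, ∀ u ∈ S, finf ≤ g i u + h i u) :
    ∀ k : ℕ,
      (Finset.range (k + 1)).inf' (Finset.nonempty_range_iff.mpr (Nat.succ_ne_zero k))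
          (fun j => |θ j|)
        ≤ max ((1 + ν) * (f0max - finf) / (ν * (k + 1)))
            (((1 + ν) * Mν ^ (1 / ν) * D ^ ((1 + ν) / ν) * (f0max - finf) / (ν * (k + 1)))
              ^ (ν / (1 + ν))) :=
  stmt12_general hm S hSconv g h h' hgconv hgrad ν Mν hν₀ hM hHolder D hD x s θ hxS hsS hθval hθopt
    hstep f0max finf hf0 hfinf
end

section
/- Assume H = (h_1,…,h_m) is convex and differentiable, each g_i convex, and x* ∈ dom(G) satisfies F(x*) ≤ F(x^k) componentwise. Then 0 ≤ min_i (f_i(x^k) − f_i(x*)) ≤ |θ(x^k)|, where θ(x^k) = min_u max_i {g_i(u) − g_i(x^k) + ⟨∇h_i(x^k), u − x^k⟩} ≤ 0. -/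
open scoped RealInnerProductSpace

/-! Since each `h i` is convex, its linearization at `xk` lies below it, so the gap function at
`xs` is at most `max_i (f_i xs - f_i xk) = -min_i (f_i xk - f_i xs)`, where `f_i = g i + h i`.
As `θ` is at most the gap function at `xs` and `θ ≤ 0`, this gives `min_i (f_i xk - f_i xs) ≤ |θ|`. -/

/-- Restricting `f` to the segment `[x, y]` reduces this to the one-variable slope bound. -/
theorem ConvexOn.apply_sub_le_of_hasFDerivWithinAt {E : Type*} [NormedAddCommGroup E]
    [NormedSpace ℝ E] {s : Set E} {f : E → ℝ} {f' : E →L[ℝ] ℝ}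
    {x y : E} (hf : ConvexOn ℝ s f) (hx : x ∈ s) (hy : y ∈ s) (hf' : HasFDerivWithinAt f f' s x) :
    f' (y - x) ≤ f y - f x := by
  set ℓ := AffineMap.lineMap (k := ℝ) x y
  have hℓ0 : ℓ 0 = x := AffineMap.lineMap_apply_zero x y
  have hℓ1 : ℓ 1 = y := AffineMap.lineMap_apply_one x y
  have hline : HasDerivWithinAt (f ∘ ℓ) (f' (y - x)) (ℓ ⁻¹' s) 0 := by
    rw [← hℓ0] at hf'
    exact hf'.comp_hasDerivWithinAt 0 AffineMap.hasDerivWithinAt_lineMap (Set.mapsTo_preimage _ _)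
  have hslope := (hf.comp_affineMap ℓ).le_slope_of_hasDerivWithinAt
    (by simpa [hℓ0] using hx) (by simpa [hℓ1] using hy) zero_lt_one hline
  simpa [slope_def_field, hℓ0, hℓ1] using hslope

theorem ConvexOn.inner_gradient_le_sub {F : Type*} [NormedAddCommGroup F]
    [InnerProductSpace ℝ F] [CompleteSpace F] {s : Set F} {f : F → ℝ} {x y G : F}
    (hf : ConvexOn ℝ s f) (hx : x ∈ s) (hy : y ∈ s) (hG : HasGradientAt f G x) :
    ⟪G, y - x⟫ ≤ f y - f x :=
  hf.apply_sub_le_of_hasFDerivWithinAt hx hy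
    (hasGradientAt_iff_hasFDerivAt.mp hG).hasFDerivWithinAt

theorem stmt13_general {n m : ℕ} (hm : 0 < m)
    (S : Set (EuclideanSpace ℝ (Fin n)))
    (g h : Fin m → EuclideanSpace ℝ (Fin n) → ℝ)
    (h' : Fin m → EuclideanSpace ℝ (Fin n) → EuclideanSpace ℝ (Fin n))
    (hhconv : ∀ i, ConvexOn ℝ S (h i))
    (hgrad : ∀ i x, HasGradientAt (h i) (h' i x) x)
    (xs xk : EuclideanSpace ℝ (Fin n)) (hxs : xs ∈ S) (hxk : xk ∈ S)
    (hdom : ∀ i, g i xs + h i xs ≤ g i xk + h i xk)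
    (θ : ℝ)
    (hθopt : ∀ u ∈ S, θ ≤ ⨆ i : Fin m, (g i u - g i xk + ⟪h' i xk, u - xk⟫))
    (hθle : θ ≤ 0) :
    0 ≤ Finset.univ.inf' (Finset.univ_nonempty_iff.mpr ⟨⟨0, hm⟩⟩)
          (fun i => (g i xk + h i xk) - (g i xs + h i xs)) ∧
      Finset.univ.inf' (Finset.univ_nonempty_iff.mpr ⟨⟨0, hm⟩⟩)
          (fun i => (g i xk + h i xk) - (g i xs + h i xs)) ≤ |θ| := by
  set decrease := Finset.univ.inf' (Finset.univ_nonempty_iff.mpr ⟨⟨0, hm⟩⟩)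
    (fun i => (g i xk + h i xk) - (g i xs + h i xs))
  have : Nonempty (Fin m) := ⟨⟨0, hm⟩⟩
  have hgap : (⨆ i : Fin m, (g i xs - g i xk + ⟪h' i xk, xs - xk⟫)) ≤ -decrease := by
    refine ciSup_le fun i => ?_
    have hlin := (hhconv i).inner_gradient_le_sub hxk hxs (hgrad i xk)
    have hmin : decrease ≤ (g i xk + h i xk) - (g i xs + h i xs) :=
      Finset.inf'_le _ (Finset.mem_univ i)
    linarith
  refine ⟨Finset.le_inf' _ _ fun i _ => sub_nonneg.mpr (hdom i), ?_⟩
  rw [abs_of_nonpos hθle]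
  linarith [(hθopt xs hxs).trans hgap]

theorem stmt13 {n m : ℕ} (hm : 0 < m)
    (S : Set (EuclideanSpace ℝ (Fin n))) (hSconv : Convex ℝ S)
    (g h : Fin m → EuclideanSpace ℝ (Fin n) → ℝ)
    (h' : Fin m → EuclideanSpace ℝ (Fin n) → EuclideanSpace ℝ (Fin n))
    (hgconv : ∀ i, ConvexOn ℝ S (g i))
    (hhconv : ∀ i, ConvexOn ℝ S (h i))
    (hgrad : ∀ i x, HasGradientAt (h i) (h' i x) x)
    (xs xk : EuclideanSpace ℝ (Fin n)) (hxs : xs ∈ S) (hxk : xk ∈ S)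
    (hdom : ∀ i, g i xs + h i xs ≤ g i xk + h i xk)
    (sxk : EuclideanSpace ℝ (Fin n)) (hsxk : sxk ∈ S) (θ : ℝ)
    (hθval : θ = ⨆ i : Fin m, (g i sxk - g i xk + ⟪h' i xk, sxk - xk⟫))
    (hθopt : ∀ u ∈ S, θ ≤ ⨆ i : Fin m, (g i u - g i xk + ⟪h' i xk, u - xk⟫))
    (hθle : θ ≤ 0) :
    0 ≤ Finset.univ.inf' (Finset.univ_nonempty_iff.mpr ⟨⟨0, hm⟩⟩)
          (fun i => (g i xk + h i xk) - (g i xs + h i xs)) ∧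
      Finset.univ.inf' (Finset.univ_nonempty_iff.mpr ⟨⟨0, hm⟩⟩)
          (fun i => (g i xk + h i xk) - (g i xs + h i xs)) ≤ |θ| :=
  stmt13_general hm S g h h' hhconv hgrad xs xk hxs hxk hdom θ hθopt hθle
end

section
/- Let (L_k) be the sequence of accepted constants in a doubling line search: L_k = 2^{ℓ_k − 1} L_{k−1} where ℓ_k ≥ 0 is the smallest index such that 2^{ℓ−1} L_{k−1} ≥ L̃_k for thresholds L̃_k > 0 (acceptance guaranteed once L_k^ℓ ≥ L̃_k). Then L_k ≤ 2 max_{0≤j≤k} L̃_j for all k ≥ (log₂(L_{−1}/L̃_0))₊. -/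
/-!
Each accepted constant is either half of the previous one (`ℓ = 0`) or, by minimality of `ℓ`,
at most twice the current threshold. Hence `L (k+1) ≤ max (2 M_k) (L₋₁ / 2^(k+1))` with `M_k` the
running maximum of the thresholds, and once `2^k ≥ L₋₁ / L̃₀` the second term is at most
`L̃₀ / 2 ≤ 2 M_k`.
-/

open Finset

theorem le_pow_of_logb_le {b x : ℝ} (hb : 1 < b) {k : ℕ} (h : Real.logb b x ≤ k) :
    x ≤ b ^ k := by
  rcases le_or_gt x 0 with hx | hx
  · exact hx.trans (by positivity)
  · exact_mod_cast (Real.logb_le_iff_le_rpow hb hx).mp h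

theorem doubling_step_le_max {a b t : ℝ} {l : ℕ} (hb : b = 2 ^ ((l : ℤ) - 1) * a)
    (hmin : ∀ j : ℕ, j < l → (2 : ℝ) ^ ((j : ℤ) - 1) * a < t) :
    b ≤ max (2 * t) (a / 2) := by
  cases l with
  | zero =>
    refine le_max_of_le_right (le_of_eq ?_)
    rw [hb]
    norm_num
    ring
  | succ n =>
    have hb' : b = 2 * (2 ^ ((n : ℤ) - 1) * a) := by
      rw [hb, ← mul_assoc, ← zpow_one_add₀ two_ne_zero]
      push_cast
      ring_nf
    exact le_max_of_le_left (by linarith [hmin n n.lt_succ_self])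

theorem le_max_partialSups_div_pow {u f : ℕ → ℝ} (hf : 0 ≤ f 0)
    (h : ∀ k, u (k + 1) ≤ max (2 * f k) (u k / 2)) (k : ℕ) :
    u (k + 1) ≤ max (2 * partialSups f k) (u 0 / 2 ^ (k + 1)) := by
  induction k with
  | zero => simpa [partialSups_zero] using h 0
  | succ n ih =>
    have hsup : partialSups f n ≤ partialSups f (n + 1) :=
      (partialSups f).monotone n.le_succ
    have hnonneg : 0 ≤ partialSups f (n + 1) :=
      hf.trans (le_partialSups_of_le f (Nat.zero_le _))
    have hnew : f (n + 1) ≤ partialSups f (n + 1) := le_partialSups f (n + 1)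
    refine (h (n + 1)).trans (max_le (le_max_of_le_left (by linarith)) ?_)
    calc u (n + 1) / 2 ≤ max (2 * partialSups f n) (u 0 / 2 ^ (n + 1)) / 2 := by linarith
      _ = max (partialSups f n) (u 0 / 2 ^ (n + 1 + 1)) := by
        rw [← max_div_div_right zero_le_two, div_div, ← pow_succ]
        ring_nf
      _ ≤ max (2 * partialSups f (n + 1)) (u 0 / 2 ^ (n + 1 + 1)) :=
        max_le_max_right _ (by linarith)

theorem stmt17_general (L Lt : ℕ → ℝ) (ℓ : ℕ → ℕ)
    (hLt : ∀ k, 0 < Lt k)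
    (hacc : ∀ k, L (k + 1) = 2 ^ ((ℓ k : ℤ) - 1) * L k)
    (hmin : ∀ k, ∀ j : ℕ, j < ℓ k → (2 : ℝ) ^ ((j : ℤ) - 1) * L k < Lt k) :
    ∀ k : ℕ, (k : ℝ) ≥ max (Real.logb 2 (L 0 / Lt 0)) 0 →
      L (k + 1) ≤ 2 * (Finset.range (k + 1)).sup'
        (Finset.nonempty_range_iff.mpr (Nat.succ_ne_zero k)) Lt := by
  intro k hk
  rw [← partialSups_eq_sup'_range]
  have hL0 : L 0 ≤ 2 ^ k * Lt 0 :=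
    (div_le_iff₀ (hLt 0)).mp (le_pow_of_logb_le one_lt_two (le_of_max_le_left hk))
  have htail : L 0 / 2 ^ (k + 1) ≤ Lt 0 / 2 := by
    rw [div_le_div_iff₀ (by positivity) two_pos, pow_succ]
    nlinarith
  have hLt0 : Lt 0 ≤ partialSups Lt k := le_partialSups_of_le Lt (Nat.zero_le k)
  refine (le_max_partialSups_div_pow (hLt 0).le
    (fun k ↦ doubling_step_le_max (hacc k) (hmin k)) k).trans (max_le le_rfl ?_)
  linarith [hLt 0]

/-- `L 0` plays the role of `L₋₁` and `L (k+1)` is the constant accepted at iteration `k`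
of the doubling line search; `ℓ k` is the accepted inner index and `Lt k` the threshold. -/
theorem stmt17 (L Lt : ℕ → ℝ) (ℓ : ℕ → ℕ)
    (hL0 : 0 < L 0) (hLt : ∀ k, 0 < Lt k)
    (hacc : ∀ k, L (k + 1) = 2 ^ ((ℓ k : ℤ) - 1) * L k)
    (hmin : ∀ k, ∀ j : ℕ, j < ℓ k → (2 : ℝ) ^ ((j : ℤ) - 1) * L k < Lt k) :
    ∀ k : ℕ, (k : ℝ) ≥ max (Real.logb 2 (L 0 / Lt 0)) 0 →
      L (k + 1) ≤ 2 * (Finset.range (k + 1)).sup'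
        (Finset.nonempty_range_iff.mpr (Nat.succ_ne_zero k)) Lt :=
  stmt17_general L Lt ℓ hLt hacc hmin
end
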